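/- arXiv:1708.01284 — 12 statements merged into one kernel-verified Lean document; each statement's English description precedes it below -/
import Mathlib

section
/- Let t be a positive integer and let G be a graph on n vertices, with each edge coloured red or blue, such that the minimum degree of G is at least (2n−2t−1)/(t+1). Then the vertex set of G can be covered by at most t monochromatic components. -/
/-!
View each vertex `v` as an edge joining its red component to its blue component, in a bipartite
multigraph on the monochromatic components. A cover of `V` by monochromatic components is a vertex
cover of this multigraph, so by Kőnig's theorem it suffices to bound its matchings: sets `s` of
vertices lying pairwise in different red and in different blue components. Such an `s` is
independent, and every vertex has at most one red and one blue neighbour in `s`, so double counting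
gives `#s * δ ≤ 2 * (n - #s)`; for `δ ≥ (2n - 2t - 1)/(t + 1)` this forces `#s ≤ t`.
-/

open SimpleGraph

/-- The spanning subgraph of `G` consisting of the edges of colour `i`,
    for an edge-colouring `c` of `G` with `r` colours. -/
def colSub {V : Type} (G : SimpleGraph V) {r : ℕ} (c : Sym2 V → Fin r) (i : Fin r) :
    SimpleGraph V where
  Adj u v := G.Adj u v ∧ c s(u, v) = i
  symm := ⟨fun u v h => ⟨h.1.symm, by rw [Sym2.eq_swap]; exact h.2⟩⟩
  loopless := ⟨fun v h => G.loopless.irrefl v h.1⟩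


/-- `S` is a monochromatic component: the vertex set of a connected component
    of the subgraph of edges of some colour `i`. -/
def IsMonoComp {V : Type} (G : SimpleGraph V) {r : ℕ} (c : Sym2 V → Fin r) (S : Set V) : Prop :=
  ∃ (i : Fin r) (K : (colSub G c i).ConnectedComponent), S = K.supp

open Finset Function

section BipartiteCover

variable {V α β : Type}

def IsBipartiteCover (f : V → α) (g : V → β) (A : Finset α) (B : Finset β) : Prop :=
  ∀ v, f v ∈ A ∨ g v ∈ B

variable {f : V → α} {g : V → β}

lemma IsBipartiteCover.swap {A : Finset α} {B : Finset β} (h : IsBipartiteCover f g A B) :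
    IsBipartiteCover g f B A :=
  fun v => (h v).symm

variable [Fintype V] [DecidableEq α]

variable (f g) in
lemma exists_min_isBipartiteCover :
    ∃ A B, IsBipartiteCover f g A B ∧
      ∀ A' B', IsBipartiteCover f g A' B' → #A + #B ≤ #A' + #B' := by
  obtain ⟨⟨A, B⟩, hcov, hmin⟩ := (measure fun p : Finset α × Finset β => #p.1 + #p.2).wf.has_min
    {p | IsBipartiteCover f g p.1 p.2}
    ⟨(univ.image f, ∅), fun v => .inl (mem_image_of_mem f (mem_univ v))⟩
  exact ⟨A, B, hcov, fun A' B' h' => not_lt.mp (hmin (A', B') h')⟩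

variable [DecidableEq β]

/-- In a minimum cover `(A, B)`, Hall's condition holds for matching `A` into the complement of
`B`: a violating `S ⊆ A` could be traded for its neighbourhood outside `B`, giving a smaller
cover. -/
lemma exists_matching_of_min_isBipartiteCover {A : Finset α} {B : Finset β}
    (hcov : IsBipartiteCover f g A B)
    (hmin : ∀ A' B', IsBipartiteCover f g A' B' → #A + #B ≤ #A' + #B') :
    ∃ e : A → V, (∀ a, f (e a) = a) ∧ Injective (g ∘ e) ∧ ∀ a, g (e a) ∉ B := by
  let D : α → Finset β := fun a => (univ.filter (f · = a)).image g \ B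
  have hall : ∀ S : Finset A, #S ≤ #(S.biUnion fun a => D a) := by
    intro S
    by_contra! hlt
    have hS : S.map (Embedding.subtype _) ⊆ A := by
      intro a ha
      obtain ⟨a, -, rfl⟩ := mem_map.mp ha
      exact a.2
    have hcov' : IsBipartiteCover f g (A \ S.map (Embedding.subtype _))
        (B ∪ S.biUnion fun a => D a) := by
      intro v
      by_cases hv : f v ∈ S.map (Embedding.subtype _)
      · obtain ⟨a, ha, hav⟩ := mem_map.mp hv
        by_cases hB : g v ∈ B
        · exact .inr (mem_union_left _ hB)
        · refine .inr (mem_union_right _ (mem_biUnion.mpr ⟨a, ha, ?_⟩))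
          simp only [D, mem_sdiff, mem_image, mem_filter, mem_univ, true_and]
          exact ⟨⟨v, hav.symm, rfl⟩, hB⟩
      · rcases hcov v with hA | hB
        · exact .inl (mem_sdiff.mpr ⟨hA, hv⟩)
        · exact .inr (mem_union_left _ hB)
    have := hmin _ _ hcov'
    have := card_sdiff_of_subset hS
    have := card_le_card hS
    have := card_union_le B (S.biUnion fun a => D a)
    rw [card_map] at *
    omega
  obtain ⟨m, hm_inj, hm_mem⟩ := (all_card_le_biUnion_card_iff_exists_injective _).mp hall
  have : ∀ a : A, ∃ v, f v = a ∧ g v = m a ∧ m a ∉ B := by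
    intro a
    obtain ⟨hm, hmB⟩ := mem_sdiff.mp (hm_mem a)
    obtain ⟨v, hv, hgv⟩ := mem_image.mp hm
    exact ⟨v, (mem_filter.mp hv).2, hgv, hmB⟩
  choose e hfe hge hmB using this
  refine ⟨e, hfe, ?_, fun a => hge a ▸ hmB a⟩
  intro a a' h
  exact hm_inj (by simpa only [comp_apply, hge] using h)

/-- **Kőnig's theorem**, for the bipartite multigraph whose edges `v : V` join `f v` to `g v`:
a matching is a set of edges on which `f` and `g` are injective. -/
theorem exists_isBipartiteCover_card_le (t : ℕ)
    (h : ∀ s : Finset V, Set.InjOn f s → Set.InjOn g s → #s ≤ t) :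
    ∃ A B, IsBipartiteCover f g A B ∧ #A + #B ≤ t := by
  obtain ⟨A, B, hcov, hmin⟩ := exists_min_isBipartiteCover f g
  obtain ⟨eA, hfA, hgA, hgA_B⟩ := exists_matching_of_min_isBipartiteCover hcov hmin
  obtain ⟨eB, hgB, hfB, hfB_A⟩ := exists_matching_of_min_isBipartiteCover hcov.swap
    fun B' A' h' => by simpa only [add_comm] using hmin A' B' h'.swap
  let e : A ⊕ B → V := Sum.elim eA eB
  have hfe : Injective (f ∘ e) := by
    rw [Sum.comp_elim, show f ∘ eA = Subtype.val from funext hfA]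
    exact Subtype.val_injective.sumElim hfB fun a b hab =>
      hfB_A b (show (f ∘ eB) b ∈ A from hab ▸ a.2)
  have hge : Injective (g ∘ e) := by
    rw [Sum.comp_elim, show g ∘ eB = Subtype.val from funext hgB]
    exact hgA.sumElim Subtype.val_injective fun a b hab =>
      hgA_B a (show (g ∘ eA) a ∈ B from hab ▸ b.2)
  refine ⟨A, B, hcov, ?_⟩
  have := h (univ.map ⟨e, hfe.of_comp⟩)
    (by rw [coe_map, coe_univ]; exact hfe.injOn.image_of_comp)
    (by rw [coe_map, coe_univ]; exact hge.injOn.image_of_comp)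
  rwa [card_map, card_univ, Fintype.card_sum, Fintype.card_coe, Fintype.card_coe] at this

end BipartiteCover

section MonochromaticComponents

variable {V : Type} {G : SimpleGraph V} {r : ℕ} {c : Sym2 V → Fin r}

lemma colSub_adj_of_adj {u v : V} (h : G.Adj u v) : (colSub G c (c s(u, v))).Adj u v :=
  ⟨h, rfl⟩

lemma isMonoComp_supp {i : Fin r} (K : (colSub G c i).ConnectedComponent) :
    IsMonoComp G c K.supp :=
  ⟨i, K, rfl⟩

variable {s : Finset V}

lemma not_adj_of_injOn_connectedComponentMk
    (hs : ∀ i, Set.InjOn (colSub G c i).connectedComponentMk s) {u v : V} (hu : u ∈ s)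
    (hv : v ∈ s) : ¬ G.Adj u v := fun h =>
  G.ne_of_adj h <| hs _ hu hv <| ConnectedComponent.sound (colSub_adj_of_adj h).reachable

/-- Distinct neighbours of `w` in `s` are joined to `w` by edges of distinct colours. -/
lemma card_filter_adj_le_of_injOn_connectedComponentMk [DecidableRel G.Adj]
    (hs : ∀ i, Set.InjOn (colSub G c i).connectedComponentMk s) (w : V) :
    #{u ∈ s | G.Adj u w} ≤ r := by
  refine (card_le_card_of_injOn (fun u => c s(u, w)) (fun _ _ => mem_univ _) ?_).trans_eq
    (card_fin r)
  intro u hu v hv huv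
  rw [mem_coe, mem_filter] at hu hv
  have hu' : (colSub G c (c s(u, w))).Adj u w := colSub_adj_of_adj hu.2
  have hv' : (colSub G c (c s(u, w))).Adj v w := ⟨hv.2, huv.symm⟩
  exact hs _ hu.1 hv.1 (ConnectedComponent.sound (hu'.reachable.trans hv'.reachable.symm))

lemma card_mul_le_of_injOn_connectedComponentMk [Fintype V] [DecidableRel G.Adj]
    (hs : ∀ i, Set.InjOn (colSub G c i).connectedComponentMk s) {δ : ℝ}
    (hδ : ∀ v, δ ≤ G.degree v) : #s * δ ≤ (Fintype.card V - #s) * r := by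
  classical
  have hdeg : ∀ u ∈ s, δ ≤ #(sᶜ.bipartiteAbove G.Adj u) := by
    intro u hu
    have : sᶜ.bipartiteAbove G.Adj u = G.neighborFinset u := by
      ext v
      simp only [mem_bipartiteAbove, mem_compl, mem_neighborFinset, and_iff_right_iff_imp]
      exact fun h hv => not_adj_of_injOn_connectedComponentMk hs hu hv h
    rw [this, card_neighborFinset_eq_degree]
    exact hδ u
  have := card_nsmul_le_card_nsmul (n := (r : ℝ)) _ hdeg fun w _ => by
    exact_mod_cast card_filter_adj_le_of_injOn_connectedComponentMk hs w
  rwa [nsmul_eq_mul, nsmul_eq_mul, card_compl, Nat.cast_sub (card_le_univ s)] at this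

lemma card_le_of_injOn_connectedComponentMk [Fintype V] [DecidableRel G.Adj]
    {c : Sym2 V → Fin 2} {t : ℕ}
    (hdeg : ∀ v, (2 * (Fintype.card V : ℝ) - 2 * t - 1) / (t + 1) ≤ G.degree v)
    (hs₀ : Set.InjOn (colSub G c 0).connectedComponentMk s)
    (hs₁ : Set.InjOn (colSub G c 1).connectedComponentMk s) : #s ≤ t := by
  have key := card_mul_le_of_injOn_connectedComponentMk (Fin.forall_fin_two.mpr ⟨hs₀, hs₁⟩) hdeg
  rw [mul_div_assoc', div_le_iff₀ (by positivity)] at key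
  push_cast at key
  -- expanding, `key` says `#s * (2 n + 1) ≤ 2 n (t + 1)`
  have : (#s : ℝ) < t + 1 := by
    by_contra! h
    nlinarith [mul_le_mul_of_nonneg_right h (by positivity : (0 : ℝ) ≤ 2 * Fintype.card V + 1)]
  exact Nat.lt_succ_iff.mp (by exact_mod_cast this)

lemma exists_isMonoComp_cover {c : Sym2 V → Fin 2} {A : Finset (colSub G c 0).ConnectedComponent}
    {B : Finset (colSub G c 1).ConnectedComponent}
    (h : IsBipartiteCover (colSub G c 0).connectedComponentMk (colSub G c 1).connectedComponentMk
      A B) :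
    ∃ S : Finset (Set V), #S ≤ #A + #B ∧ (∀ C ∈ S, IsMonoComp G c C) ∧ ∀ v, ∃ C ∈ S, v ∈ C := by
  classical
  refine ⟨A.image (·.supp) ∪ B.image (·.supp), ?_, ?_, fun v => ?_⟩
  · exact (card_union_le _ _).trans (add_le_add card_image_le card_image_le)
  · simp only [mem_union, mem_image]
    rintro C (⟨K, -, rfl⟩ | ⟨K, -, rfl⟩) <;> exact isMonoComp_supp K
  · rcases h v with hv | hv
    · exact ⟨_, mem_union_left _ (mem_image_of_mem _ hv), rfl⟩
    · exact ⟨_, mem_union_right _ (mem_image_of_mem _ hv), rfl⟩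

end MonochromaticComponents

theorem cover_by_t_mono_components_general {V : Type} [Fintype V]
    (G : SimpleGraph V) [DecidableRel G.Adj] (c : Sym2 V → Fin 2)
    (t n : ℕ) (hn : Fintype.card V = n)
    (hdeg : ∀ v : V, (2 * (n : ℝ) - 2 * t - 1) / (t + 1) ≤ G.degree v) :
    ∃ S : Finset (Set V), S.card ≤ t ∧ (∀ C ∈ S, IsMonoComp G c C) ∧
      ∀ v : V, ∃ C ∈ S, v ∈ C := by
  classical
  subst hn
  obtain ⟨A, B, hcov, hcard⟩ := exists_isBipartiteCover_card_le t
    fun s hs₀ hs₁ => card_le_of_injOn_connectedComponentMk hdeg hs₀ hs₁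
  obtain ⟨S, hS, hmono, hcovS⟩ := exists_isMonoComp_cover hcov
  exact ⟨S, hS.trans hcard, hmono, hcovS⟩

/-- A 2-coloured graph on `n` vertices with minimum degree at least `(2n-2t-1)/(t+1)`
    can be covered by at most `t` monochromatic components. -/
theorem cover_by_t_mono_components {V : Type} [Fintype V]
    (G : SimpleGraph V) [DecidableRel G.Adj] (c : Sym2 V → Fin 2)
    (t n : ℕ) (ht : 1 ≤ t) (hn : Fintype.card V = n)
    (hdeg : ∀ v : V, (2 * (n : ℝ) - 2 * t - 1) / (t + 1) ≤ G.degree v) :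
    ∃ S : Finset (Set V), S.card ≤ t ∧ (∀ C ∈ S, IsMonoComp G c C) ∧
      ∀ v : V, ∃ C ∈ S, v ∈ C :=
  cover_by_t_mono_components_general G c t n hn hdeg
end

section
/- Let G be a graph on n vertices, with each edge coloured red or blue, such that the minimum degree of G is at least 3n/4. If R is a red component of G of order greater than n/2 and x is a vertex not in R, then the union of R and the blue component containing x is the whole vertex set of G. -/
/-!
Suppose some vertex `v` lies neither in `R` nor in the blue component of `x`. An edge leaving the
red component `R` cannot be red, so every edge from `x` or `v` into `R` is blue, and a common
neighbour of `x` and `v` in `R` would join them by a blue path. Hence `x` and `v` have disjoint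
neighbourhoods in `R`, while each has at least `3n/4 - (n - |R|)` neighbours there. This forces
`2 (|R| - n/4) ≤ |R|`, i.e. `|R| ≤ n/2`.
-/

open SimpleGraph

open Finset

section Colouring

variable {V : Type} {G : SimpleGraph V}

theorem colSub_color_ne_of_adj_of_notMem_supp {r : ℕ} {c : Sym2 V → Fin r} {i : Fin r}
    {C : (colSub G c i).ConnectedComponent} {z w : V} (hz : z ∉ C.supp) (hw : w ∈ C.supp)
    (hadj : G.Adj z w) : c s(z, w) ≠ i :=
  fun hc => hz ((C.mem_supp_congr_adj (G := colSub G c i) ⟨hadj, hc⟩).mpr hw)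

theorem colSub_one_adj_of_adj_of_notMem_supp {c : Sym2 V → Fin 2}
    {C : (colSub G c 0).ConnectedComponent} {z w : V} (hz : z ∉ C.supp) (hw : w ∈ C.supp)
    (hadj : G.Adj z w) : (colSub G c 1).Adj z w :=
  ⟨hadj, by have := colSub_color_ne_of_adj_of_notMem_supp hz hw hadj; omega⟩

theorem colSub_one_reachable_of_common_neighbor_mem_supp {c : Sym2 V → Fin 2}
    {C : (colSub G c 0).ConnectedComponent} {x v u : V} (hx : x ∉ C.supp) (hv : v ∉ C.supp)
    (hu : u ∈ C.supp) (hxu : G.Adj x u) (hvu : G.Adj v u) : (colSub G c 1).Reachable x v :=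
  (colSub_one_adj_of_adj_of_notMem_supp hx hu hxu).reachable.trans
    (colSub_one_adj_of_adj_of_notMem_supp hv hu hvu).reachable.symm

end Colouring

theorem SimpleGraph.degree_add_degree_le_of_disjoint_inter {V : Type} [Fintype V] [DecidableEq V]
    (G : SimpleGraph V) [DecidableRel G.Adj] {x v : V} (S : Finset V)
    (h : Disjoint (G.neighborFinset x ∩ S) (G.neighborFinset v ∩ S)) :
    G.degree x + G.degree v ≤ #S + 2 * #Sᶜ := by
  have degree_le (z : V) : G.degree z ≤ #(G.neighborFinset z ∩ S) + #Sᶜ := by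
    calc G.degree z ≤ #((G.neighborFinset z ∩ S) ∪ Sᶜ) :=
          card_le_card fun w hw => by by_cases hS : w ∈ S <;> simp_all
      _ ≤ _ := card_union_le _ _
  have inter_le : #(G.neighborFinset x ∩ S) + #(G.neighborFinset v ∩ S) ≤ #S := by
    rw [← card_union_of_disjoint h]
    exact card_le_card (union_subset inter_subset_right inter_subset_right)
  linarith [degree_le x, degree_le v]

/-- In a 2-coloured graph with minimum degree at least `3n/4`, if `R` is a red
    component of order greater than `n/2` and `x ∉ R`, then `R` together with the
    blue component of `x` covers all the vertices. -/
theorem red_component_plus_blue_component_cover {V : Type} [Fintype V]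
    (G : SimpleGraph V) [DecidableRel G.Adj] (c : Sym2 V → Fin 2)
    (n : ℕ) (hn : Fintype.card V = n)
    (hdeg : ∀ v : V, 3 * (n : ℝ) / 4 ≤ G.degree v)
    (R : (colSub G c 0).ConnectedComponent) (hR : (n : ℝ) / 2 < R.supp.ncard)
    (x : V) (hx : x ∉ R.supp) :
    R.supp ∪ ((colSub G c 1).connectedComponentMk x).supp = Set.univ := by
  classical
  refine Set.eq_univ_of_forall fun v => ?_
  by_contra hcover
  obtain ⟨hvR, hvB⟩ := not_or.mp hcover
  set S := R.supp.toFinset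
  have hdisj : Disjoint (G.neighborFinset x ∩ S) (G.neighborFinset v ∩ S) := by
    refine disjoint_left.mpr fun u hux huv => hvB ?_
    simp only [S, mem_inter, mem_neighborFinset, Set.mem_toFinset] at hux huv
    exact ConnectedComponent.sound
      (colSub_one_reachable_of_common_neighbor_mem_supp hx hvR hux.2 hux.1 huv.1).symm
  have hcount := G.degree_add_degree_le_of_disjoint_inter S hdisj
  have hS : (#S + #Sᶜ : ℝ) = n := by exact_mod_cast (card_add_card_compl S).trans hn
  rw [Set.ncard_eq_toFinset_card'] at hR
  have hcount' : (G.degree x + G.degree v : ℝ) ≤ #S + 2 * #Sᶜ := by exact_mod_cast hcount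
  linarith [hdeg x, hdeg v]
end

section
/- Let G be a graph on n vertices, with each edge coloured red, blue or yellow, such that the minimum degree of G is at least 7n/8. If there exist a red component R, a blue component B and a yellow component Y with |R ∩ B ∩ Y| ≥ n/8, then the vertex set of G can be covered by a red component, a blue component and a yellow component (in fact by R, B and Y themselves). -/
/-
Every vertex `v` has fewer than `n/8` non-neighbours besides itself, so the common part
`R ∩ B ∩ Y`, of size at least `n/8`, contains `v` or a neighbour `u` of `v`. In the second case
the edge `uv` has some colour, and the component of that colour containing `u` also contains `v`.
-/

open SimpleGraph

theorem SimpleGraph.exists_mem_eq_or_adj_of_card_le_ncard_add_degree {V : Type*} [Fintype V]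
    (G : SimpleGraph V) [DecidableRel G.Adj] (S : Set V) (v : V)
    (h : Fintype.card V ≤ S.ncard + G.degree v) : ∃ u ∈ S, u = v ∨ G.Adj u v := by
  classical
  by_contra! hS
  have hsub : S ⊆ ↑(insert v (G.neighborFinset v))ᶜ := fun u hu => by
    simpa [adj_comm] using (hS u hu).symm
  have hle := Set.ncard_le_ncard hsub
  rw [Set.ncard_coe_finset, Finset.card_compl,
    Finset.card_insert_of_notMem (by simp), card_neighborFinset_eq_degree] at hle
  have := G.degree_lt_card_verts v
  omega

/-- In a 3-coloured graph with minimum degree at least `7n/8`, if a red component `R`,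
    a blue component `B` and a yellow component `Y` satisfy `|R ∩ B ∩ Y| ≥ n/8`, then
    `R`, `B` and `Y` together cover all the vertices. -/
theorem three_intersection_cover {V : Type} [Fintype V]
    (G : SimpleGraph V) [DecidableRel G.Adj] (c : Sym2 V → Fin 3)
    (n : ℕ) (hn : Fintype.card V = n)
    (hdeg : ∀ v : V, 7 * (n : ℝ) / 8 ≤ G.degree v)
    (R : (colSub G c 0).ConnectedComponent) (B : (colSub G c 1).ConnectedComponent)
    (Y : (colSub G c 2).ConnectedComponent)
    (hint : (n : ℝ) / 8 ≤ ((R.supp ∩ B.supp ∩ Y.supp).ncard : ℝ)) :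
    R.supp ∪ B.supp ∪ Y.supp = Set.univ := by
  refine Set.eq_univ_of_forall fun v => ?_
  have hcard : Fintype.card V ≤ (R.supp ∩ B.supp ∩ Y.supp).ncard + G.degree v := by
    have := hdeg v
    rw [hn]
    exact_mod_cast (by linarith :
      (n : ℝ) ≤ (R.supp ∩ B.supp ∩ Y.supp).ncard + G.degree v)
  obtain ⟨u, ⟨⟨huR, huB⟩, huY⟩, rfl | hadj⟩ :=
    G.exists_mem_eq_or_adj_of_card_le_ncard_add_degree _ v hcard
  · exact Or.inl (Or.inl huR)
  · obtain h | h | h : c s(u, v) = 0 ∨ c s(u, v) = 1 ∨ c s(u, v) = 2 := by omega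
    · exact Or.inl (Or.inl (R.mem_supp_of_adj_mem_supp huR ⟨hadj, h⟩))
    · exact Or.inl (Or.inr (B.mem_supp_of_adj_mem_supp huB ⟨hadj, h⟩))
    · exact Or.inr (Y.mem_supp_of_adj_mem_supp huY ⟨hadj, h⟩)
end

section
/- Let G be a graph on n vertices, with each edge coloured red, blue or yellow, such that the minimum degree of G is at least 7n/8. If there exist two monochromatic components of distinct colours whose intersection has size at least n/4, then the vertex set of G can be covered by three monochromatic components of pairwise distinct colours. -/
open SimpleGraph

/-! Proof idea: let `S` be the intersection of the two components `Cᵢ`, `Cⱼ`. Every vertex misses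
fewer than `n/8` other vertices, so any two vertices `u`, `v` outside `Cᵢ ∪ Cⱼ` have a common
neighbour in `S`, as `|S| ≥ n/4`. An edge from outside `Cᵢ ∪ Cⱼ` into `S` can have neither colour
`i` nor colour `j`, so it has the third colour `t`; hence `u` and `v` lie in the same
`t`-component, which completes the cover. -/

lemma Fin.three_eq_of_ne {i j k t : Fin 3} (hij : i ≠ j) (hti : t ≠ i) (htj : t ≠ j)
    (hki : k ≠ i) (hkj : k ≠ j) : k = t := by
  revert i j k t; decide

namespace SimpleGraph

variable {V : Type} {G : SimpleGraph V}

lemma exists_common_neighbor_mem [Fintype V] [DecidableRel G.Adj] {S : Set V} {u v : V}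
    (hu : u ∉ S) (hv : v ∉ S)
    (hS : 2 * Fintype.card V < S.ncard + G.degree u + G.degree v + 2) :
    ∃ s ∈ S, G.Adj u s ∧ G.Adj v s := by
  classical
  by_contra! hcon
  have hsub : S ⊆ Gᶜ.neighborSet u ∪ Gᶜ.neighborSet v := by
    intro s hs
    by_cases hus : G.Adj u s
    · exact Or.inr ⟨fun h => hv (h ▸ hs), hcon s hs hus⟩
    · exact Or.inl ⟨fun h => hu (h ▸ hs), hus⟩
  have hncard (w : V) : (Gᶜ.neighborSet w).ncard = Fintype.card V - 1 - G.degree w := by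
    rw [Set.ncard_eq_toFinset_card', Set.toFinset_card, card_neighborSet_eq_degree, degree_compl]
  have hle := (Set.ncard_le_ncard hsub).trans (Set.ncard_union_le _ _)
  rw [hncard, hncard] at hle
  have := G.degree_lt_card_verts u
  have := G.degree_lt_card_verts v
  omega

lemma colSub_mem_supp_of_adj {r : ℕ} {c : Sym2 V → Fin r} {i : Fin r}
    {C : (colSub G c i).ConnectedComponent} {s w : V} (hs : s ∈ C.supp) (hadj : G.Adj w s)
    (hc : c s(w, s) = i) : w ∈ C.supp :=
  (C.mem_supp_congr_adj ⟨hadj, hc⟩).mpr hs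

section ThreeColours

variable {c : Sym2 V → Fin 3} {i j t : Fin 3} {Ci : (colSub G c i).ConnectedComponent}
  {Cj : (colSub G c j).ConnectedComponent}

lemma colSub_adj_of_notMem_union (hij : i ≠ j) (hti : t ≠ i) (htj : t ≠ j) {w s : V}
    (hw : w ∉ Ci.supp ∪ Cj.supp) (hs : s ∈ Ci.supp ∩ Cj.supp) (hadj : G.Adj w s) :
    (colSub G c t).Adj w s := by
  refine ⟨hadj, Fin.three_eq_of_ne hij hti htj (fun h => hw ?_) (fun h => hw ?_)⟩
  · exact Or.inl (colSub_mem_supp_of_adj hs.1 hadj h)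
  · exact Or.inr (colSub_mem_supp_of_adj hs.2 hadj h)

lemma exists_cover_of_common_neighbor (hij : i ≠ j) (hti : t ≠ i) (htj : t ≠ j)
    (hcommon : ∀ u v, u ∉ Ci.supp ∪ Cj.supp → v ∉ Ci.supp ∪ Cj.supp →
      ∃ s ∈ Ci.supp ∩ Cj.supp, G.Adj u s ∧ G.Adj v s) :
    ∃ Ct : (colSub G c t).ConnectedComponent, Ci.supp ∪ Cj.supp ∪ Ct.supp = Set.univ := by
  by_cases hA : ∃ u, u ∉ Ci.supp ∪ Cj.supp
  swap
  · obtain ⟨v, -⟩ := Ci.exists_rep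
    exact ⟨(colSub G c t).connectedComponentMk v,
      Set.eq_univ_of_forall fun w => Or.inl (not_exists_not.mp hA w)⟩
  obtain ⟨u, hu⟩ := hA
  refine ⟨(colSub G c t).connectedComponentMk u, Set.eq_univ_of_forall fun w => ?_⟩
  by_cases hw : w ∈ Ci.supp ∪ Cj.supp
  · exact Or.inl hw
  obtain ⟨s, hs, hus, hws⟩ := hcommon u w hu hw
  exact Or.inr <| ConnectedComponent.sound <|
    (colSub_adj_of_notMem_union hij hti htj hw hs hws).reachable.trans
      (colSub_adj_of_notMem_union hij hti htj hu hs hus).reachable.symm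

lemma exists_ordered_cover_of_cover (hij : i ≠ j) (hti : t ≠ i) (htj : t ≠ j)
    {Ct : (colSub G c t).ConnectedComponent} (h : Ci.supp ∪ Cj.supp ∪ Ct.supp = Set.univ) :
    ∃ (R : (colSub G c 0).ConnectedComponent) (B : (colSub G c 1).ConnectedComponent)
      (Y : (colSub G c 2).ConnectedComponent), R.supp ∪ B.supp ∪ Y.supp = Set.univ := by
  simp only [Set.eq_univ_iff_forall, Set.mem_union] at h ⊢
  fin_cases i <;> fin_cases j <;> fin_cases t <;> simp at hij hti htj <;>
    exact ⟨‹_›, ‹_›, ‹_›, fun v => by have := h v; tauto⟩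

end ThreeColours

end SimpleGraph

/-- In a 3-coloured graph with minimum degree at least `7n/8`, if two monochromatic
    components of distinct colours intersect in at least `n/4` vertices, then the
    vertices can be covered by three monochromatic components of pairwise distinct
    colours. -/
theorem two_intersection_cover {V : Type} [Fintype V]
    (G : SimpleGraph V) [DecidableRel G.Adj] (c : Sym2 V → Fin 3)
    (n : ℕ) (hn : Fintype.card V = n)
    (hdeg : ∀ v : V, 7 * (n : ℝ) / 8 ≤ G.degree v)
    (hint : ∃ (i j : Fin 3), i ≠ j ∧
      ∃ (Ci : (colSub G c i).ConnectedComponent) (Cj : (colSub G c j).ConnectedComponent),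
        (n : ℝ) / 4 ≤ ((Ci.supp ∩ Cj.supp).ncard : ℝ)) :
    ∃ (R : (colSub G c 0).ConnectedComponent) (B : (colSub G c 1).ConnectedComponent)
      (Y : (colSub G c 2).ConnectedComponent),
      R.supp ∪ B.supp ∪ Y.supp = Set.univ := by
  obtain ⟨i, j, hij, Ci, Cj, hS⟩ := hint
  obtain ⟨t, hti, htj⟩ := (by decide : ∀ a b : Fin 3, ∃ t, t ≠ a ∧ t ≠ b) i j
  have hcommon (u v : V) (hu : u ∉ Ci.supp ∪ Cj.supp) (hv : v ∉ Ci.supp ∪ Cj.supp) :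
      ∃ s ∈ Ci.supp ∩ Cj.supp, G.Adj u s ∧ G.Adj v s := by
    refine exists_common_neighbor_mem (fun h => hu (Or.inl h.1)) (fun h => hv (Or.inl h.1)) ?_
    have hdu := hdeg u
    have hdv := hdeg v
    rw [hn]
    exact_mod_cast (by linarith :
      (2 * n : ℝ) < (Ci.supp ∩ Cj.supp).ncard + G.degree u + G.degree v + 2)
  obtain ⟨Ct, hcover⟩ := exists_cover_of_common_neighbor hij hti htj hcommon
  exact exists_ordered_cover_of_cover hij hti htj hcover
end

section
/- Let G be a graph on n vertices, with each edge coloured red, blue or yellow, such that the minimum degree of G is at least 7n/8. If G has a monochromatic component of order at least n/2, then the vertex set of G can be covered by three monochromatic components of pairwise distinct colours. -/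
/-!
Let `C` be the large red component and suppose it is not everything. No edge leaving `C` is
red, and every vertex has at most `n/8` non-neighbours. Take `v ∉ C`; if its blue and yellow
components cover the rest we are done, so let `w ∉ C` lie in neither. For a common neighbour
`u ∈ C` of `v` and `w` the edges `vu`, `wu` are blue or yellow and cannot both have the same
colour, so `u` lies either in blue(`v`) ∩ yellow(`w`) or in blue(`w`) ∩ yellow(`v`). There are
at least `n/2 - 2·n/8 = n/4` such `u`, so one of the two sets has at least `n/8` of them; every
vertex outside `C` has a neighbour in that set, joined to it by a blue or a yellow edge.
-/

open SimpleGraph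

namespace SimpleGraph

variable {V : Type} [Fintype V] (G : SimpleGraph V) [DecidableRel G.Adj]

theorem ncard_neighborSet_eq_degree (v : V) : (G.neighborSet v).ncard = G.degree v := by
  rw [← Nat.card_coe_set_eq, Nat.card_eq_fintype_card, card_neighborSet_eq_degree]

theorem ncard_compl_neighborSet_add_degree (v : V) :
    (G.neighborSet v)ᶜ.ncard + G.degree v = Fintype.card V := by
  rw [← ncard_neighborSet_eq_degree, Set.ncard_compl_add_ncard, Nat.card_eq_fintype_card]

theorem exists_adj_mem_of_card_le {A : Set V} {d : V} (hd : d ∉ A)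
    (h : Fintype.card V ≤ A.ncard + G.degree d) : ∃ u ∈ A, G.Adj d u := by
  by_contra! hA
  have hdisj : Disjoint A (G.neighborSet d) := Set.disjoint_left.mpr hA
  have hsub : A ∪ G.neighborSet d ⊆ {d}ᶜ := by
    rintro u (hu | hu) rfl
    exacts [hd hu, G.loopless.irrefl _ hu]
  have := Set.ncard_le_ncard hsub
  rw [Set.ncard_union_eq hdisj, ncard_neighborSet_eq_degree, Set.ncard_compl,
    Set.ncard_singleton, Nat.card_eq_fintype_card] at this
  have : 0 < Fintype.card V := Fintype.card_pos_iff.mpr ⟨d⟩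
  omega

theorem ncard_add_degree_add_degree_le (C : Set V) (v w : V) :
    C.ncard + G.degree v + G.degree w ≤
      (C ∩ G.neighborSet v ∩ G.neighborSet w).ncard + 2 * Fintype.card V := by
  have hsub : C ⊆ (C ∩ G.neighborSet v ∩ G.neighborSet w) ∪ (G.neighborSet v)ᶜ ∪
      (G.neighborSet w)ᶜ := by
    intro u hu
    by_cases hv : G.Adj v u <;> by_cases hw : G.Adj w u <;> simp_all
  have := (Set.ncard_le_ncard hsub).trans
    ((Set.ncard_union_le _ _).trans (add_le_add_left (Set.ncard_union_le _ _) _))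
  have := G.ncard_compl_neighborSet_add_degree v
  have := G.ncard_compl_neighborSet_add_degree w
  omega

end SimpleGraph

theorem connectedComponentMk_colSub_eq {V : Type} {G : SimpleGraph V} {r : ℕ}
    {c : Sym2 V → Fin r} {m : Fin r} {u v : V} (hadj : G.Adj u v) (hc : c s(u, v) = m) :
    (colSub G c m).connectedComponentMk u = (colSub G c m).connectedComponentMk v :=
  ConnectedComponent.connectedComponentMk_eq_of_adj ⟨hadj, hc⟩

section ThreeColours

variable {V : Type} {G : SimpleGraph V} {c : Sym2 V → Fin 3} {i j k : Fin 3}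

theorem colour_eq_or_of_adj_of_mem_supp (hall : ∀ m : Fin 3, m = i ∨ m = j ∨ m = k)
    {C : (colSub G c i).ConnectedComponent} {d u : V} (hd : d ∉ C.supp) (hu : u ∈ C.supp)
    (hadj : G.Adj d u) : c s(d, u) = j ∨ c s(d, u) = k :=
  (hall _).resolve_left fun hi => hd ((C.mem_supp_congr_adj ⟨hadj, hi⟩).mpr hu)

theorem mem_supp_or_mem_supp_of_adj_adj (hall : ∀ m : Fin 3, m = i ∨ m = j ∨ m = k)
    {C : (colSub G c i).ConnectedComponent} {v w u : V} (hv : v ∉ C.supp) (hw : w ∉ C.supp)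
    (hwB : (colSub G c j).connectedComponentMk w ≠ (colSub G c j).connectedComponentMk v)
    (hwY : (colSub G c k).connectedComponentMk w ≠ (colSub G c k).connectedComponentMk v)
    (hu : u ∈ C.supp) (hvu : G.Adj v u) (hwu : G.Adj w u) :
    (u ∈ ((colSub G c j).connectedComponentMk v).supp ∧
        u ∈ ((colSub G c k).connectedComponentMk w).supp) ∨
      (u ∈ ((colSub G c j).connectedComponentMk w).supp ∧
        u ∈ ((colSub G c k).connectedComponentMk v).supp) := by
  rcases colour_eq_or_of_adj_of_mem_supp hall hv hu hvu with hvj | hvk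
  · have hvuB := connectedComponentMk_colSub_eq hvu hvj
    refine Or.inl ⟨hvuB.symm, ?_⟩
    rcases colour_eq_or_of_adj_of_mem_supp hall hw hu hwu with hwj | hwk
    · exact absurd ((connectedComponentMk_colSub_eq hwu hwj).trans hvuB.symm) hwB
    · exact (connectedComponentMk_colSub_eq hwu hwk).symm
  · have hvuY := connectedComponentMk_colSub_eq hvu hvk
    refine Or.inr ⟨?_, hvuY.symm⟩
    rcases colour_eq_or_of_adj_of_mem_supp hall hw hu hwu with hwj | hwk
    · exact (connectedComponentMk_colSub_eq hwu hwj).symm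
    · exact absurd ((connectedComponentMk_colSub_eq hwu hwk).trans hvuY.symm) hwY

theorem mem_supp_of_subset_supp_inter [Fintype V] [DecidableRel G.Adj]
    (hall : ∀ m : Fin 3, m = i ∨ m = j ∨ m = k) {C : (colSub G c i).ConnectedComponent}
    {B : (colSub G c j).ConnectedComponent} {Y : (colSub G c k).ConnectedComponent}
    {A : Set V} (hAC : A ⊆ C.supp) (hAB : A ⊆ B.supp) (hAY : A ⊆ Y.supp)
    (hdeg : ∀ x, Fintype.card V ≤ A.ncard + G.degree x) (x : V) :
    x ∈ C.supp ∨ x ∈ B.supp ∨ x ∈ Y.supp := by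
  by_cases hx : x ∈ C.supp
  · exact Or.inl hx
  obtain ⟨u, huA, hadj⟩ := G.exists_adj_mem_of_card_le (fun h => hx (hAC h)) (hdeg x)
  rcases colour_eq_or_of_adj_of_mem_supp hall hx (hAC huA) hadj with hj | hk
  · exact Or.inr (Or.inl ((B.mem_supp_congr_adj ⟨hadj, hj⟩).mpr (hAB huA)))
  · exact Or.inr (Or.inr ((Y.mem_supp_congr_adj ⟨hadj, hk⟩).mpr (hAY huA)))

theorem exists_cover_of_notMem_supp [Fintype V] [DecidableRel G.Adj]
    (hall : ∀ m : Fin 3, m = i ∨ m = j ∨ m = k) {t : ℝ}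
    (hdeg : ∀ x, (Fintype.card V : ℝ) ≤ G.degree x + t)
    {C : (colSub G c i).ConnectedComponent} (hC : 4 * t ≤ C.supp.ncard) {v w : V}
    (hv : v ∉ C.supp) (hw : w ∉ C.supp)
    (hwB : (colSub G c j).connectedComponentMk w ≠ (colSub G c j).connectedComponentMk v)
    (hwY : (colSub G c k).connectedComponentMk w ≠ (colSub G c k).connectedComponentMk v) :
    ∃ (B : (colSub G c j).ConnectedComponent) (Y : (colSub G c k).ConnectedComponent),
      ∀ x, x ∈ C.supp ∨ x ∈ B.supp ∨ x ∈ Y.supp := by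
  set W := C.supp ∩ G.neighborSet v ∩ G.neighborSet w
  set W₁ := W ∩ (((colSub G c j).connectedComponentMk v).supp ∩
    ((colSub G c k).connectedComponentMk w).supp)
  set W₂ := W ∩ (((colSub G c j).connectedComponentMk w).supp ∩
    ((colSub G c k).connectedComponentMk v).supp)
  have hW : 2 * t ≤ W.ncard := by
    have : ((C.supp.ncard + G.degree v + G.degree w : ℕ) : ℝ) ≤
        (W.ncard + 2 * Fintype.card V : ℕ) := by
      exact_mod_cast G.ncard_add_degree_add_degree_le C.supp v w
    push_cast at this
    linarith [hdeg v, hdeg w]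
  have hsplit : (W.ncard : ℝ) ≤ W₁.ncard + W₂.ncard := by
    refine mod_cast (Set.ncard_le_ncard fun u hu => ?_).trans (Set.ncard_union_le W₁ W₂)
    rcases mem_supp_or_mem_supp_of_adj_adj hall hv hw hwB hwY hu.1.1 hu.1.2 hu.2 with h | h
    exacts [Or.inl ⟨hu, h⟩, Or.inr ⟨hu, h⟩]
  have hdeg' {A : Set V} (hA : t ≤ A.ncard) (x : V) : Fintype.card V ≤ A.ncard + G.degree x :=
    mod_cast (by linarith [hdeg x] : (Fintype.card V : ℝ) ≤ A.ncard + G.degree x)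
  rcases le_or_gt t W₁.ncard with h₁ | h₁
  · exact ⟨_, _, mem_supp_of_subset_supp_inter hall (fun u hu => hu.1.1.1) (fun u hu => hu.2.1)
      (fun u hu => hu.2.2) (hdeg' h₁)⟩
  · exact ⟨_, _, mem_supp_of_subset_supp_inter hall (fun u hu => hu.1.1.1) (fun u hu => hu.2.1)
      (fun u hu => hu.2.2) (hdeg' (by linarith : t ≤ W₂.ncard))⟩

theorem exists_cover_of_four_mul_le_ncard [Fintype V] [DecidableRel G.Adj]
    (hall : ∀ m : Fin 3, m = i ∨ m = j ∨ m = k) {t : ℝ}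
    (hdeg : ∀ x, (Fintype.card V : ℝ) ≤ G.degree x + t)
    (C : (colSub G c i).ConnectedComponent) (hC : 4 * t ≤ C.supp.ncard) :
    ∃ (B : (colSub G c j).ConnectedComponent) (Y : (colSub G c k).ConnectedComponent),
      ∀ x, x ∈ C.supp ∨ x ∈ B.supp ∨ x ∈ Y.supp := by
  by_cases hcov : ∀ x, x ∈ C.supp
  · obtain ⟨v, -⟩ := C.exists_rep
    exact ⟨(colSub G c j).connectedComponentMk v, (colSub G c k).connectedComponentMk v,
      fun x => Or.inl (hcov x)⟩
  push Not at hcov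
  obtain ⟨v, hv⟩ := hcov
  by_cases hsep : ∃ w, w ∉ C.supp ∧
      (colSub G c j).connectedComponentMk w ≠ (colSub G c j).connectedComponentMk v ∧
      (colSub G c k).connectedComponentMk w ≠ (colSub G c k).connectedComponentMk v
  · obtain ⟨w, hw, hwB, hwY⟩ := hsep
    exact exists_cover_of_notMem_supp hall hdeg hC hv hw hwB hwY
  push Not at hsep
  refine ⟨(colSub G c j).connectedComponentMk v, (colSub G c k).connectedComponentMk v,
    fun x => ?_⟩
  by_cases hx : x ∈ C.supp
  · exact Or.inl hx
  by_cases hxB : (colSub G c j).connectedComponentMk x = (colSub G c j).connectedComponentMk v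
  exacts [Or.inr (Or.inl hxB), Or.inr (Or.inr (hsep x hx hxB))]

end ThreeColours

/-- In a 3-coloured graph with minimum degree at least `7n/8`, if there is a
    monochromatic component of order at least `n/2`, then the vertices can be covered
    by three monochromatic components of pairwise distinct colours. -/
theorem one_large_component_cover {V : Type} [Fintype V]
    (G : SimpleGraph V) [DecidableRel G.Adj] (c : Sym2 V → Fin 3)
    (n : ℕ) (hn : Fintype.card V = n)
    (hdeg : ∀ v : V, 7 * (n : ℝ) / 8 ≤ G.degree v)
    (hbig : ∃ (i : Fin 3) (C : (colSub G c i).ConnectedComponent),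
      (n : ℝ) / 2 ≤ (C.supp.ncard : ℝ)) :
    ∃ (R : (colSub G c 0).ConnectedComponent) (B : (colSub G c 1).ConnectedComponent)
      (Y : (colSub G c 2).ConnectedComponent),
      R.supp ∪ B.supp ∪ Y.supp = Set.univ := by
  obtain ⟨i, C, hC⟩ := hbig
  have hdeg' (v : V) : (Fintype.card V : ℝ) ≤ G.degree v + n / 8 := by
    rw [hn]; linarith [hdeg v]
  have hC' : 4 * ((n : ℝ) / 8) ≤ C.supp.ncard := by linarith
  fin_cases i
  · obtain ⟨B, Y, h⟩ :=
      exists_cover_of_four_mul_le_ncard (j := 1) (k := 2) (by decide) hdeg' C hC'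
    exact ⟨C, B, Y, Set.eq_univ_of_forall fun x => by
      have := h x; simp only [Set.mem_union]; tauto⟩
  · obtain ⟨R, Y, h⟩ :=
      exists_cover_of_four_mul_le_ncard (j := 0) (k := 2) (by decide) hdeg' C hC'
    exact ⟨R, C, Y, Set.eq_univ_of_forall fun x => by
      have := h x; simp only [Set.mem_union]; tauto⟩
  · obtain ⟨R, B, h⟩ :=
      exists_cover_of_four_mul_le_ncard (j := 0) (k := 1) (by decide) hdeg' C hC'
    exact ⟨R, B, C, Set.eq_univ_of_forall fun x => by
      have := h x; simp only [Set.mem_union]; tauto⟩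
end

section
/- Let H be a bipartite graph with parts X and Y, both nonempty, and with at least one edge. Then there exists an edge xy of H (with x ∈ X, y ∈ Y) such that d_H(x) + d_H(y) ≥ e(H) · (1/|X| + 1/|Y|), where e(H) is the number of edges of H and d_H denotes the degree in H. -/
/-!
Summing `d(x) + d(y)` over the edges `xy` counts every vertex `v` exactly `d(v)` times, so the sum
is `∑_X d² + ∑_Y d²`. The degrees on either side sum to `e(H)`, so by Cauchy–Schwarz this is at
least `e(H)² / |X| + e(H)² / |Y|`, and some edge is at least as large as the average.
-/

open SimpleGraph Finset

namespace SimpleGraph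

variable {V : Type*} [Fintype V] {G : SimpleGraph V} [DecidableRel G.Adj] {s t : Finset V}

theorem IsBipartiteWith.sum_interedges_eq_sum_neighborFinset {M : Type*} [AddCommMonoid M]
    (h : G.IsBipartiteWith s t) (f : V × V → M) :
    ∑ p ∈ G.interedges s t, f p = ∑ v ∈ s, ∑ w ∈ G.neighborFinset v, f (v, w) := by
  rw [interedges_def, sum_filter, sum_product]
  refine sum_congr rfl fun v hv => ?_
  rw [isBipartiteWith_neighborFinset h hv, sum_filter]

theorem IsBipartiteWith.card_interedges (h : G.IsBipartiteWith s t) :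
    #(G.interedges s t) = #G.edgeFinset := by
  rw [card_eq_sum_ones, h.sum_interedges_eq_sum_neighborFinset,
    ← isBipartiteWith_sum_degrees_eq_card_edges h]
  simp

theorem IsBipartiteWith.sum_interedges_degree_fst (h : G.IsBipartiteWith s t) :
    ∑ p ∈ G.interedges s t, G.degree p.1 = ∑ v ∈ s, G.degree v ^ 2 := by
  rw [h.sum_interedges_eq_sum_neighborFinset]
  refine sum_congr rfl fun v _ => ?_
  rw [sum_const_nat (m := G.degree v) fun _ _ => rfl, card_neighborFinset_eq_degree, sq]

theorem IsBipartiteWith.sum_interedges_degree_snd (h : G.IsBipartiteWith s t) :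
    ∑ p ∈ G.interedges s t, G.degree p.2 = ∑ w ∈ t, G.degree w ^ 2 := by
  rw [← h.symm.sum_interedges_degree_fst]
  exact sum_nbij' Prod.swap Prod.swap (fun p hp => G.swap_mem_interedges_iff.2 hp)
    (fun p hp => G.swap_mem_interedges_iff.2 hp) (by simp) (by simp) (by simp)

theorem IsBipartiteWith.sq_card_edgeFinset_div_le_sum_sq_degree (h : G.IsBipartiteWith s t) :
    (#G.edgeFinset : ℝ) ^ 2 / #s ≤ ∑ v ∈ s, (G.degree v : ℝ) ^ 2 := by
  refine div_le_of_le_mul₀ (by positivity) (by positivity) ?_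
  rw [← isBipartiteWith_sum_degrees_eq_card_edges h, Nat.cast_sum, mul_comm]
  exact sq_sum_le_card_mul_sum_sq

theorem IsBipartiteWith.card_edgeFinset_mul_le_sum_interedges_degree_add_degree
    (h : G.IsBipartiteWith s t) :
    (#G.edgeFinset : ℝ) * (#G.edgeFinset * (1 / #s + 1 / #t)) ≤
      ∑ p ∈ G.interedges s t, ((G.degree p.1 : ℝ) + G.degree p.2) := by
  have hfst := congrArg (Nat.cast (R := ℝ)) h.sum_interedges_degree_fst
  have hsnd := congrArg (Nat.cast (R := ℝ)) h.sum_interedges_degree_snd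
  push_cast at hfst hsnd
  rw [sum_add_distrib, hfst, hsnd]
  calc _ = (#G.edgeFinset : ℝ) ^ 2 / #s + (#G.edgeFinset : ℝ) ^ 2 / #t := by ring
    _ ≤ _ := add_le_add h.sq_card_edgeFinset_div_le_sum_sq_degree
      h.symm.sq_card_edgeFinset_div_le_sum_sq_degree

end SimpleGraph

theorem exists_edge_large_degree_sum_general {V : Type} [Fintype V]
    (H : SimpleGraph V) [DecidableRel H.Adj]
    (X Y : Finset V) (hdisj : Disjoint X Y)
    (hbip : ∀ u v : V, H.Adj u v → (u ∈ X ∧ v ∈ Y) ∨ (u ∈ Y ∧ v ∈ X))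
    (hedge : 0 < H.edgeFinset.card) :
    ∃ x ∈ X, ∃ y ∈ Y, H.Adj x y ∧
      (H.edgeFinset.card : ℝ) * (1 / X.card + 1 / Y.card) ≤
        (H.degree x : ℝ) + (H.degree y : ℝ) := by
  have hXY : H.IsBipartiteWith X Y :=
    ⟨disjoint_coe.2 hdisj, fun u v huv => by simpa using hbip u v huv⟩
  have hne : (H.interedges X Y).Nonempty := by rwa [← card_pos, hXY.card_interedges]
  have hsum : ∑ _p ∈ H.interedges X Y, (#H.edgeFinset : ℝ) * (1 / #X + 1 / #Y) ≤
      ∑ p ∈ H.interedges X Y, ((H.degree p.1 : ℝ) + H.degree p.2) := by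
    rw [sum_const, hXY.card_interedges, nsmul_eq_mul]
    exact hXY.card_edgeFinset_mul_le_sum_interedges_degree_add_degree
  obtain ⟨p, hp, hle⟩ := exists_le_of_sum_le hne hsum
  obtain ⟨hx, hy, hadj⟩ := H.mem_interedges_iff.1 hp
  exact ⟨p.1, hx, p.2, hy, hadj, hle⟩

/-- In a bipartite graph `H` with nonempty parts `X` and `Y` and at least one edge,
    there is an edge `xy` with `d(x) + d(y) ≥ e(H) * (1/|X| + 1/|Y|)`. -/
theorem exists_edge_large_degree_sum {V : Type} [Fintype V] [DecidableEq V]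
    (H : SimpleGraph V) [DecidableRel H.Adj]
    (X Y : Finset V) (hdisj : Disjoint X Y) (hunion : X ∪ Y = Finset.univ)
    (hX : X.Nonempty) (hY : Y.Nonempty)
    (hbip : ∀ u v : V, H.Adj u v → (u ∈ X ∧ v ∈ Y) ∨ (u ∈ Y ∧ v ∈ X))
    (hedge : 0 < H.edgeFinset.card) :
    ∃ x ∈ X, ∃ y ∈ Y, H.Adj x y ∧
      (H.edgeFinset.card : ℝ) * (1 / X.card + 1 / Y.card) ≤
        (H.degree x : ℝ) + (H.degree y : ℝ) :=
  exists_edge_large_degree_sum_general H X Y hdisj hbip hedge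
end

section
/- Let G be a graph on n vertices, with each edge coloured red, blue or yellow, such that the minimum degree of G is at least 7n/8. If R is a red component and B is a blue component of G with |R \ B| ≥ n/4 and |B \ R| ≥ n/4, then the symmetric difference R △ B is contained in a single yellow component of G; in particular, G has a yellow component of order at least n/2. -/
/-!
An edge of `G` between `R \ B` and `B \ R` is neither red (it would put its end in `B \ R`
into `R`) nor blue, so it is yellow. A vertex has at most `n / 8 - 1` non-neighbours besides
itself, so any two vertices outside a set of order at least `n / 4` have a common neighbour in
it. Hence any two vertices of `R \ B` are joined by a yellow path through `B \ R`, and vice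
versa, and a single yellow edge links the two sides.
-/

open SimpleGraph

variable {V : Type}

lemma SimpleGraph.ConnectedComponent.not_reachable_of_mem_of_notMem {H : SimpleGraph V}
    {C : H.ConnectedComponent} {u w : V} (hu : u ∈ C.supp) (hw : w ∉ C.supp) :
    ¬ H.Reachable u w := by
  intro h
  rw [mem_supp_iff] at hu hw
  exact hw (ConnectedComponent.sound h.symm ▸ hu)

section CommonNeighbor

variable [Fintype V] (G : SimpleGraph V) [DecidableRel G.Adj]

lemma SimpleGraph.ncard_compl_insert_neighborSet_add_degree (v : V) :
    (insert v (G.neighborSet v))ᶜ.ncard + G.degree v + 1 = Fintype.card V := by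
  have h := Set.ncard_add_ncard_compl (insert v (G.neighborSet v))
  rw [Set.ncard_insert_of_notMem (by simp), Set.ncard_eq_toFinset_card', Set.toFinset_card,
    card_neighborSet_eq_degree, Nat.card_eq_fintype_card] at h
  omega

lemma SimpleGraph.exists_common_neighbor_mem_s11 {S : Set V} {u u' : V} (hu : u ∉ S) (hu' : u' ∉ S)
    (hcard : 2 * Fintype.card V < S.ncard + G.degree u + G.degree u' + 2) :
    ∃ w ∈ S, G.Adj u w ∧ G.Adj u' w := by
  by_contra! h
  have hS : S ⊆ (insert u (G.neighborSet u))ᶜ ∪ (insert u' (G.neighborSet u'))ᶜ := by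
    intro w hw
    have hwu : w ≠ u := ne_of_mem_of_not_mem hw hu
    have hwu' : w ≠ u' := ne_of_mem_of_not_mem hw hu'
    by_cases hadj : G.Adj u w
    · exact Or.inr (by simp [hwu', h w hw hadj])
    · exact Or.inl (by simp [hwu, hadj])
  have hle := (Set.ncard_le_ncard hS).trans (Set.ncard_union_le _ _)
  have hu_card := G.ncard_compl_insert_neighborSet_add_degree u
  have hu'_card := G.ncard_compl_insert_neighborSet_add_degree u'
  omega

variable {G} {n : ℕ}

lemma SimpleGraph.exists_common_neighbor_of_seven_eighths_le_degree (hn : Fintype.card V = n)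
    (hdeg : ∀ v : V, 7 * (n : ℝ) / 8 ≤ G.degree v) {S : Set V}
    (hS : (n : ℝ) / 4 ≤ S.ncard) {u u' : V} (hu : u ∉ S) (hu' : u' ∉ S) :
    ∃ w ∈ S, G.Adj u w ∧ G.Adj u' w := by
  refine G.exists_common_neighbor_mem_s11 hu hu' ?_
  have hdu := hdeg u
  have hdu' := hdeg u'
  have h : (2 * Fintype.card V : ℝ) < S.ncard + G.degree u + G.degree u' + 2 := by
    rw [hn]; linarith
  exact_mod_cast h

lemma SimpleGraph.reachable_of_common_neighbors_in (hn : Fintype.card V = n)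
    (hdeg : ∀ v : V, 7 * (n : ℝ) / 8 ≤ G.degree v) {H : SimpleGraph V} {P Q : Set V}
    (hPQ : Disjoint P Q) (hQ : (n : ℝ) / 4 ≤ Q.ncard)
    (hH : ∀ u ∈ P, ∀ w ∈ Q, G.Adj u w → H.Adj u w) {x x' : V} (hx : x ∈ P) (hx' : x' ∈ P) :
    H.Reachable x x' := by
  obtain ⟨w, hw, hxw, hx'w⟩ := exists_common_neighbor_of_seven_eighths_le_degree hn hdeg hQ
    (hPQ.notMem_of_mem_left hx) (hPQ.notMem_of_mem_left hx')
  exact (hH x hx w hw hxw).reachable.trans (hH x' hx' w hw hx'w).reachable.symm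

end CommonNeighbor

section ThreeColouring

variable {G : SimpleGraph V} {c : Sym2 V → Fin 3} {u w : V}

lemma colSub_adj_two_of_not_reachable (hadj : G.Adj u w)
    (h0 : ¬ (colSub G c 0).Reachable u w) (h1 : ¬ (colSub G c 1).Reachable u w) :
    (colSub G c 2).Adj u w := by
  refine ⟨hadj, ?_⟩
  have hcol : (colSub G c (c s(u, w))).Reachable u w := Adj.reachable ⟨hadj, rfl⟩
  obtain h | h | h : c s(u, w) = 0 ∨ c s(u, w) = 1 ∨ c s(u, w) = 2 := by omega
  · exact absurd (h ▸ hcol) h0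
  · exact absurd (h ▸ hcol) h1
  · exact h

lemma colSub_adj_two_of_mem_sdiff {R : (colSub G c 0).ConnectedComponent}
    {B : (colSub G c 1).ConnectedComponent} (hadj : G.Adj u w)
    (hu : u ∈ R.supp \ B.supp) (hw : w ∈ B.supp \ R.supp) : (colSub G c 2).Adj u w :=
  colSub_adj_two_of_not_reachable hadj
    (ConnectedComponent.not_reachable_of_mem_of_notMem hu.1 hw.2)
    fun h => ConnectedComponent.not_reachable_of_mem_of_notMem hw.1 hu.2 h.symm

end ThreeColouring

/-- In a 3-coloured graph with minimum degree at least `7n/8`, if `R` is a red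
    component and `B` a blue component with `|R \ B| ≥ n/4` and `|B \ R| ≥ n/4`,
    then the symmetric difference `R △ B` is contained in a single yellow component,
    which has order at least `n/2`. -/
theorem symmdiff_in_yellow_component {V : Type} [Fintype V]
    (G : SimpleGraph V) [DecidableRel G.Adj] (c : Sym2 V → Fin 3)
    (n : ℕ) (hn : Fintype.card V = n)
    (hdeg : ∀ v : V, 7 * (n : ℝ) / 8 ≤ G.degree v)
    (R : (colSub G c 0).ConnectedComponent) (B : (colSub G c 1).ConnectedComponent)
    (hRB : (n : ℝ) / 4 ≤ ((R.supp \ B.supp).ncard : ℝ))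
    (hBR : (n : ℝ) / 4 ≤ ((B.supp \ R.supp).ncard : ℝ)) :
    ∃ Y : (colSub G c 2).ConnectedComponent,
      (R.supp \ B.supp) ∪ (B.supp \ R.supp) ⊆ Y.supp ∧
        (n : ℝ) / 2 ≤ (Y.supp.ncard : ℝ) := by
  have hdisj : Disjoint (R.supp \ B.supp) (B.supp \ R.supp) := disjoint_sdiff_sdiff
  have hyellow : ∀ u ∈ R.supp \ B.supp, ∀ w ∈ B.supp \ R.supp, G.Adj u w →
      (colSub G c 2).Adj u w := fun _ hu _ hw hadj => colSub_adj_two_of_mem_sdiff hadj hu hw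
  have hn_pos : 0 < n := hn ▸ Fintype.card_pos_iff.2 ⟨R.exists_rep.choose⟩
  obtain ⟨u₀, hu₀⟩ : (R.supp \ B.supp).Nonempty := by
    rw [← Set.ncard_pos]
    exact_mod_cast (by positivity : (0 : ℝ) < n / 4).trans_le hRB
  obtain ⟨w₀, hw₀, hu₀w₀, -⟩ := exists_common_neighbor_of_seven_eighths_le_degree hn hdeg hBR
    (hdisj.notMem_of_mem_left hu₀) (hdisj.notMem_of_mem_left hu₀)
  have hsub : (R.supp \ B.supp) ∪ (B.supp \ R.supp) ⊆
      ((colSub G c 2).connectedComponentMk u₀).supp := by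
    rintro x (hx | hx) <;> refine ConnectedComponent.sound ?_
    · exact reachable_of_common_neighbors_in hn hdeg hdisj hBR hyellow hx hu₀
    · exact (reachable_of_common_neighbors_in hn hdeg hdisj.symm hRB
        (fun u hu w hw hadj => (hyellow w hw u hu hadj.symm).symm) hx hw₀).trans
        (hyellow u₀ hu₀ w₀ hw₀ hu₀w₀).reachable.symm
  refine ⟨_, hsub, ?_⟩
  calc (n : ℝ) / 2 ≤ (R.supp \ B.supp).ncard + (B.supp \ R.supp).ncard := by linarith
    _ = ((R.supp \ B.supp) ∪ (B.supp \ R.supp)).ncard := by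
      rw [Set.ncard_union_eq hdisj]; push_cast; rfl
    _ ≤ _ := by exact_mod_cast Set.ncard_le_ncard hsub
end

section
/- Let G be a graph on n vertices with minimum degree at least (2n−5)/3. If X is an independent set of three vertices in G, then there exists a vertex of G adjacent to all three vertices of X. -/
open SimpleGraph

/-!
Count the edges between `X` and the rest of the graph. Since `X` is independent, every
neighbour of a vertex of `X` lies outside `X`, so the degree sum over `X` is at least
`3 · (2n - 5)/3 = 2n - 5`. Without a common neighbour every one of the `n - 3` outside
vertices sees at most two vertices of `X`, so that sum is at most `2n - 6`.
-/

open Finset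

namespace SimpleGraph

variable {V : Type} [Fintype V] [DecidableEq V] (G : SimpleGraph V) [DecidableRel G.Adj]

theorem neighborFinset_eq_filter_compl_of_isIndepSet {X : Finset V} (hX : G.IsIndepSet X)
    {x : V} (hx : x ∈ X) : G.neighborFinset x = {v ∈ Xᶜ | G.Adj x v} := by
  ext v
  simp only [mem_neighborFinset, mem_filter, mem_compl]
  exact ⟨fun hxv => ⟨fun hv => hX hx hv (G.ne_of_adj hxv) hxv, hxv⟩, And.right⟩

theorem sum_degree_eq_sum_compl_card_filter_adj {X : Finset V} (hX : G.IsIndepSet X) :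
    ∑ x ∈ X, G.degree x = ∑ v ∈ Xᶜ, #{x ∈ X | G.Adj v x} := by
  calc ∑ x ∈ X, G.degree x = ∑ x ∈ X, #(Xᶜ.bipartiteAbove G.Adj x) := by
        refine sum_congr rfl fun x hx => ?_
        rw [← card_neighborFinset_eq_degree,
          G.neighborFinset_eq_filter_compl_of_isIndepSet hX hx, bipartiteAbove]
    _ = ∑ v ∈ Xᶜ, #(X.bipartiteBelow G.Adj v) :=
        sum_card_bipartiteAbove_eq_sum_card_bipartiteBelow _
    _ = ∑ v ∈ Xᶜ, #{x ∈ X | G.Adj v x} := by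
        simp only [bipartiteBelow, G.adj_comm]

theorem sum_degree_le_of_isIndepSet_of_forall_exists_not_adj {X : Finset V}
    (hX : G.IsIndepSet X) (hcommon : ∀ w, ∃ x ∈ X, ¬ G.Adj w x) :
    ∑ x ∈ X, G.degree x ≤ (#X - 1) * #Xᶜ := by
  have hmissing : ∀ v, #{x ∈ X | G.Adj v x} ≤ #X - 1 := fun v => by
    obtain ⟨x, hx, hvx⟩ := hcommon v
    have : {x ∈ X | G.Adj v x} ⊂ X :=
      (ssubset_iff_of_subset (filter_subset _ _)).mpr ⟨x, hx, by simp [hvx]⟩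
    exact Nat.le_sub_one_of_lt (card_lt_card this)
  calc ∑ x ∈ X, G.degree x = ∑ v ∈ Xᶜ, #{x ∈ X | G.Adj v x} :=
        G.sum_degree_eq_sum_compl_card_filter_adj hX
    _ ≤ ∑ _v ∈ Xᶜ, (#X - 1) := sum_le_sum fun v _ => hmissing v
    _ = (#X - 1) * #Xᶜ := by rw [sum_const, smul_eq_mul, mul_comm]

end SimpleGraph

/-- In a graph on `n` vertices with minimum degree at least `(2n-5)/3`, every
    independent set of three vertices has a common neighbour. -/
theorem independent_triple_common_neighbour {V : Type} [Fintype V]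
    (G : SimpleGraph V) [DecidableRel G.Adj]
    (n : ℕ) (hn : Fintype.card V = n)
    (hdeg : ∀ v : V, (2 * (n : ℝ) - 5) / 3 ≤ G.degree v)
    (X : Finset V) (hX : X.card = 3)
    (hind : ∀ x ∈ X, ∀ y ∈ X, ¬ G.Adj x y) :
    ∃ w : V, ∀ x ∈ X, G.Adj w x := by
  classical
  by_contra! hcommon
  have hupper := G.sum_degree_le_of_isIndepSet_of_forall_exists_not_adj
    (fun x hx y hy _ => hind x hx y hy) hcommon
  have hlower := card_nsmul_le_sum X (fun x => (G.degree x : ℝ)) _ fun x _ => hdeg x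
  have hcard : #Xᶜ + 3 = n := by rw [← hX, card_compl_add_card, hn]
  rw [hX] at hupper hlower
  have hupper' : ∑ x ∈ X, (G.degree x : ℝ) ≤ 2 * #Xᶜ := by exact_mod_cast hupper
  have hcard' : (#Xᶜ : ℝ) + 3 = n := by exact_mod_cast hcard
  simp only [nsmul_eq_mul, Nat.cast_ofNat] at hlower
  linarith
end

section
/- There exists an integer n₀ such that the following holds for every n ≥ n₀. Let G be a graph on n vertices, with each edge coloured red or blue, such that the minimum degree of G is at least (2n−5)/3, and suppose G has a blue component of order at most (n+1)/6. Then there exists a set U of vertices that is connected in red, with |U| ≤ 27·log n, such that the set N_r(U) of vertices outside U joined by a red edge to some vertex of U satisfies |N_r(U)| ≥ 2n/3 − 27·log n (log denotes the natural logarithm). -/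
open SimpleGraph

/-!
Fix a vertex `y` of the small blue component `S`. A blue edge at a vertex of `S` stays inside `S`,
so every vertex of `S` has at least `(2n - 5)/3 - |S| ≈ n/2` red neighbours. Grow a red-connected
set `U ∋ y` and track the deficit `d = 2n/3 - |W|`, where `W = U ∪ N_r(U)`; initially `d ≤ n/6`.
While `d ≥ 3`, about `d` vertices of `S` lie outside `W`, each with about `n/2` red neighbours,
none of them in `U`. Double counting shows that some vertex of `N_r(U)`, or of `S \ W`, has at least
`d/2` red neighbours outside `W`; a vertex of `S \ W` is joined in red to `N_r(U)`, so adding it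
to `U` costs at most two vertices, and halves `d`. After `⌈2 log n⌉` rounds `d ≤ 3`, while
`|U| ≤ 4 log n + 3`.
-/

open Finset

lemma exists_le_two_pow_lt_two_mul_log_add_one {x : ℝ} (hx : 1 ≤ x) :
    ∃ K : ℕ, x ≤ 2 ^ K ∧ (K : ℝ) < 2 * Real.log x + 1 := by
  have hlog := Real.log_nonneg hx
  refine ⟨⌈2 * Real.log x⌉₊, ?_, Nat.ceil_lt_add_one (by positivity)⟩
  have hK := Nat.le_ceil (2 * Real.log x)
  rw [← Real.log_le_log_iff (by linarith) (by positivity), Real.log_pow]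
  nlinarith [Real.log_two_gt_d9]

namespace SimpleGraph

variable {V : Type*} (R : SimpleGraph V)

lemma induce_insert_connected {s : Set V} {w a : V} (hs : (R.induce s).Connected) (hw : w ∈ s)
    (ha : R.Adj w a) : (R.induce (insert a s)).Connected := by
  rw [Set.insert_eq, Set.union_comm]
  exact connected_induce_union hs.preconnected (by simp [induce_singleton_eq_top]) hw rfl ha

lemma induce_singleton_connected (v : V) : (R.induce {v}).Connected := by
  rw [induce_singleton_eq_top]
  exact connected_top

variable [Fintype V] [DecidableEq V] [DecidableRel R.Adj]

def outerNbhd (U : Finset V) : Finset V := {v | v ∉ U ∧ ∃ u ∈ U, R.Adj u v}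

def closedNbhd (U : Finset V) : Finset V := U ∪ R.outerNbhd U

variable {R} {U U' : Finset V} {u v : V}

@[simp]
lemma mem_outerNbhd : v ∈ R.outerNbhd U ↔ v ∉ U ∧ ∃ u ∈ U, R.Adj u v := by
  simp [outerNbhd]

lemma mem_closedNbhd : v ∈ R.closedNbhd U ↔ v ∈ U ∨ ∃ u ∈ U, R.Adj u v := by
  rw [closedNbhd, mem_union, mem_outerNbhd]
  tauto

lemma subset_closedNbhd : U ⊆ R.closedNbhd U := subset_union_left

lemma outerNbhd_subset_closedNbhd : R.outerNbhd U ⊆ R.closedNbhd U := subset_union_right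

lemma mem_closedNbhd_of_adj (hu : u ∈ U) (h : R.Adj u v) : v ∈ R.closedNbhd U :=
  mem_closedNbhd.2 (Or.inr ⟨u, hu, h⟩)

lemma closedNbhd_mono (h : U ⊆ U') : R.closedNbhd U ⊆ R.closedNbhd U' := by
  intro v hv
  rcases mem_closedNbhd.1 hv with hv | ⟨u, hu, huv⟩
  · exact subset_closedNbhd (h hv)
  · exact mem_closedNbhd_of_adj (h hu) huv

lemma card_closedNbhd : #(R.closedNbhd U) = #U + #(R.outerNbhd U) :=
  card_union_of_disjoint (Finset.disjoint_left.2 fun _ hv hv' => (mem_outerNbhd.1 hv').1 hv)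

lemma card_closedNbhd_add_card_adj_le (hUU' : U ⊆ U') (hv : v ∈ U') :
    #(R.closedNbhd U) + #{w ∈ (R.closedNbhd U)ᶜ | R.Adj v w} ≤ #(R.closedNbhd U') := by
  rw [← card_union_of_disjoint
    (Finset.disjoint_right.2 fun w hw => mem_compl.1 (mem_filter.1 hw).1)]
  refine card_le_card (union_subset (closedNbhd_mono hUU') fun w hw => ?_)
  exact mem_closedNbhd_of_adj hv (mem_filter.1 hw).2

variable {S : Finset V} {x y : V}

lemma degree_le_card_erase_union_neighborFinset {G : SimpleGraph V} [DecidableRel G.Adj]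
    (h : ∀ z, G.Adj x z → R.Adj x z ∨ z ∈ S) :
    G.degree x ≤ #(S.erase x ∪ R.neighborFinset x) := by
  rw [← card_neighborFinset_eq_degree]
  refine card_le_card fun z hz => ?_
  have hxz := (mem_neighborFinset G x z).1 hz
  rcases h z hxz with h | h
  · exact mem_union_right _ ((mem_neighborFinset R x z).2 h)
  · exact mem_union_left _ (mem_erase.2 ⟨hxz.ne', h⟩)

lemma card_erase_union_neighborFinset_lt (hy : y ∈ U) :
    #(S.erase y ∪ R.neighborFinset y) < #(R.closedNbhd U) + #(S \ R.closedNbhd U) := by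
  have hyW := subset_closedNbhd (R := R) hy
  have hsub : S.erase y ∪ R.neighborFinset y ⊆ (R.closedNbhd U).erase y ∪ S \ R.closedNbhd U := by
    intro z hz
    rcases mem_union.1 hz with hz | hz
    · obtain ⟨hzy, hzS⟩ := mem_erase.1 hz
      by_cases hzW : z ∈ R.closedNbhd U
      · exact mem_union_left _ (mem_erase.2 ⟨hzy, hzW⟩)
      · exact mem_union_right _ (mem_sdiff.2 ⟨hzS, hzW⟩)
    · have hyz := (mem_neighborFinset R y z).1 hz
      exact mem_union_left _ (mem_erase.2 ⟨hyz.ne', mem_closedNbhd_of_adj hy hyz⟩)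
  have := (card_le_card hsub).trans (card_union_le _ _)
  rw [card_erase_of_mem hyW] at this
  have := card_pos.2 ⟨y, hyW⟩
  omega

lemma card_erase_union_neighborFinset_le (hx : x ∉ R.closedNbhd U) :
    #(S.erase x ∪ R.neighborFinset x) ≤
      #(S.erase x) + #{u ∈ R.outerNbhd U | R.Adj x u} +
        #{v ∈ (R.closedNbhd U)ᶜ | R.Adj x v} := by
  refine (card_le_card fun z hz => ?_).trans
    ((card_union_le _ _).trans (Nat.add_le_add_right (card_union_le _ _) _))
  rcases mem_union.1 hz with hz | hz
  · exact mem_union_left _ (mem_union_left _ hz)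
  have hxz := (mem_neighborFinset R x z).1 hz
  have hzU : z ∉ U := fun hzU => hx (mem_closedNbhd_of_adj hzU hxz.symm)
  by_cases hzW : z ∈ R.closedNbhd U
  · refine mem_union_left _ (mem_union_right _ (mem_filter.2 ⟨?_, hxz⟩))
    rcases mem_closedNbhd.1 hzW with hz' | ⟨u, hu, huz⟩
    · exact absurd hz' hzU
    · exact mem_outerNbhd.2 ⟨hzU, u, hu, huz⟩
  · exact mem_union_right _ (mem_filter.2 ⟨mem_compl.2 hzW, hxz⟩)

lemma card_filter_adj_compl_closedNbhd_lt (hx : x ∉ R.closedNbhd U) :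
    #{v ∈ (R.closedNbhd U)ᶜ | R.Adj x v} < #(R.closedNbhd U)ᶜ :=
  card_lt_card (filter_ssubset.2 ⟨x, mem_compl.2 hx, R.loopless.irrefl x⟩)

lemma card_closedNbhd_ge (hS : (#S : ℝ) ≤ (Fintype.card V + 1) / 6)
    (hdeg : ∀ x ∈ S, (2 * Fintype.card V - 5) / 3 ≤ (#(S.erase x ∪ R.neighborFinset x) : ℝ))
    (hy : y ∈ S) (hyU : y ∈ U) :
    (3 * Fintype.card V + 1) / 6 ≤ (#(R.closedNbhd U) : ℝ) := by
  have hWy : y ∈ R.closedNbhd {y} := subset_closedNbhd (mem_singleton_self y)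
  have h1 : (#(S.erase y ∪ R.neighborFinset y) : ℝ) + 1 ≤
      #(R.closedNbhd {y}) + #(S \ R.closedNbhd {y}) := by
    exact_mod_cast card_erase_union_neighborFinset_lt (mem_singleton_self y)
  have h2 : (#(S \ R.closedNbhd {y}) : ℝ) + 1 ≤ #S := by
    exact_mod_cast card_lt_card ⟨sdiff_subset, fun h => (mem_sdiff.1 (h hy)).2 hWy⟩
  have h3 : (#(R.closedNbhd {y}) : ℝ) ≤ #(R.closedNbhd U) := by
    exact_mod_cast card_le_card (closedNbhd_mono (singleton_subset_iff.2 hyU))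
  linarith [hdeg y hy]

lemma exists_adj_outerNbhd (hS : (#S : ℝ) ≤ (Fintype.card V + 1) / 6)
    (hdeg : ∀ x ∈ S, (2 * Fintype.card V - 5) / 3 ≤ (#(S.erase x ∪ R.neighborFinset x) : ℝ))
    (hy : y ∈ S) (hyU : y ∈ U) (hx : x ∈ S) (hxW : x ∉ R.closedNbhd U) :
    ∃ u ∈ R.outerNbhd U, R.Adj x u := by
  by_contra! h
  -- then all neighbours of `x` are in `S` or red ones outside `closedNbhd U`, of size `> n/2`
  have h1 := card_erase_union_neighborFinset_le (S := S) hxW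
  rw [filter_eq_empty_iff.2 h, card_empty, add_zero] at h1
  have h2 := card_filter_adj_compl_closedNbhd_lt hxW
  have h3 := card_erase_add_one hx
  have h4 := card_compl_add_card (R.closedNbhd U)
  have h5 : (#(S.erase x ∪ R.neighborFinset x) : ℝ) + #(R.closedNbhd U) + 2 ≤
      #S + Fintype.card V := by
    exact_mod_cast (show _ ≤ _ by omega)
  linarith [hdeg x hx, card_closedNbhd_ge hS hdeg hy hyU]

lemma exists_many_adj_compl_closedNbhd (hS : (#S : ℝ) ≤ (Fintype.card V + 1) / 6)
    (hdeg : ∀ x ∈ S, (2 * Fintype.card V - 5) / 3 ≤ (#(S.erase x ∪ R.neighborFinset x) : ℝ))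
    (hy : y ∈ S) (hyU : y ∈ U) (hd : 3 ≤ 2 * (Fintype.card V : ℝ) / 3 - #(R.closedNbhd U)) :
    ∃ z, (z ∈ R.outerNbhd U ∨ z ∈ S \ R.closedNbhd U) ∧
      (2 * (Fintype.card V : ℝ) / 3 - #(R.closedNbhd U)) / 2 ≤
        #{v ∈ (R.closedNbhd U)ᶜ | R.Adj z v} := by
  set n : ℝ := (Fintype.card V : ℝ)
  set W := R.closedNbhd U
  set d := 2 * n / 3 - #W with hd_def
  by_contra! h
  set c := (2 * n - 5) / 3 - (#S - 1) - d / 2 with hc_def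
  have hc : ∀ x ∈ S \ W, c ≤ #{u ∈ R.outerNbhd U | R.Adj x u} := by
    intro x hx
    obtain ⟨hxS, hxW⟩ := mem_sdiff.1 hx
    have h1 : #(S.erase x ∪ R.neighborFinset x) ≤ #(S.erase x) +
        #{u ∈ R.outerNbhd U | R.Adj x u} + #{v ∈ Wᶜ | R.Adj x v} :=
      card_erase_union_neighborFinset_le hxW
    have h2 := card_erase_add_one hxS
    have h3 : (#(S.erase x ∪ R.neighborFinset x) : ℝ) + 1 ≤
        #S + #{u ∈ R.outerNbhd U | R.Adj x u} + #{v ∈ Wᶜ | R.Adj x v} := by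
      exact_mod_cast (show _ ≤ _ by omega)
    have := hdeg x hxS
    have := h x (Or.inr hx)
    linarith
  -- double count the red edges between `S \ W` and `N_r(U)`
  have hcount : #(S \ W) • c ≤ #(R.outerNbhd U) • (d / 2) := by
    refine card_nsmul_le_card_nsmul (fun x u => R.Adj x u) hc fun u hu => ?_
    refine (lt_of_le_of_lt (Nat.cast_le.2 (card_le_card fun x hx => ?_)) (h u (Or.inl hu))).le
    obtain ⟨hxSW, hxu⟩ := (mem_bipartiteBelow _).1 hx
    exact mem_filter.2 ⟨mem_compl.2 (mem_sdiff.1 hxSW).2, hxu.symm⟩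
  rw [nsmul_eq_mul, nsmul_eq_mul] at hcount
  have hNW : (#(R.outerNbhd U) : ℝ) ≤ #W := by
    exact_mod_cast card_le_card outerNbhd_subset_closedNbhd
  have hSW : (#(S.erase y ∪ R.neighborFinset y) : ℝ) + 1 ≤ #W + #(S \ W) := by
    exact_mod_cast card_erase_union_neighborFinset_lt (S := S) hyU
  have hW : (3 * n + 1) / 6 ≤ #W := card_closedNbhd_ge hS hdeg hy hyU
  have hSW' : d - 2 / 3 ≤ (#(S \ W) : ℝ) := by linarith [hdeg y hy]
  have hc0 : (3 * n - 5) / 6 - d / 2 ≤ c := by linarith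
  nlinarith [mul_le_mul_of_nonneg_right hNW (by linarith : (0 : ℝ) ≤ d / 2),
    mul_le_mul hSW' hc0 (by linarith) (Nat.cast_nonneg _),
    mul_nonneg (by linarith : (0 : ℝ) ≤ d - 3) (by linarith : (0 : ℝ) ≤ n - 19)]

lemma exists_connected_superset_card_closedNbhd_ge
    (hS : (#S : ℝ) ≤ (Fintype.card V + 1) / 6)
    (hdeg : ∀ x ∈ S, (2 * Fintype.card V - 5) / 3 ≤ (#(S.erase x ∪ R.neighborFinset x) : ℝ))
    (hy : y ∈ S) (hyU : y ∈ U) (hU : (R.induce (U : Set V)).Connected)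
    (hd : 3 ≤ 2 * (Fintype.card V : ℝ) / 3 - #(R.closedNbhd U)) :
    ∃ U' : Finset V, U ⊆ U' ∧ (R.induce (U' : Set V)).Connected ∧ #U' ≤ #U + 2 ∧
      #(R.closedNbhd U) + (2 * (Fintype.card V : ℝ) / 3 - #(R.closedNbhd U)) / 2 ≤
        #(R.closedNbhd U') := by
  obtain ⟨z, hz, hz_many⟩ := exists_many_adj_compl_closedNbhd hS hdeg hy hyU hd
  suffices ∃ U' : Finset V, U ⊆ U' ∧ z ∈ U' ∧ (R.induce (U' : Set V)).Connected ∧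
      #U' ≤ #U + 2 by
    obtain ⟨U', hUU', hzU', hU', hcard⟩ := this
    refine ⟨U', hUU', hU', hcard, ?_⟩
    have : (#(R.closedNbhd U) : ℝ) + #{v ∈ (R.closedNbhd U)ᶜ | R.Adj z v} ≤
        #(R.closedNbhd U') := by exact_mod_cast card_closedNbhd_add_card_adj_le hUU' hzU'
    linarith
  rcases hz with hzN | hzSW
  · obtain ⟨-, u, hu, huz⟩ := mem_outerNbhd.1 hzN
    refine ⟨insert z U, subset_insert _ _, mem_insert_self _ _, ?_, ?_⟩
    · rw [coe_insert]
      exact R.induce_insert_connected hU hu huz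
    · exact (card_insert_le _ _).trans (by omega)
  · obtain ⟨hzS, hzW⟩ := mem_sdiff.1 hzSW
    obtain ⟨u, huN, hzu⟩ := exists_adj_outerNbhd hS hdeg hy hyU hzS hzW
    obtain ⟨-, w, hw, hwu⟩ := mem_outerNbhd.1 huN
    refine ⟨insert z (insert u U), (subset_insert _ _).trans (subset_insert _ _),
      mem_insert_self _ _, ?_, ?_⟩
    · rw [coe_insert, coe_insert]
      exact R.induce_insert_connected (R.induce_insert_connected hU hw hwu)
        (Set.mem_insert u _) hzu.symm
    · exact (card_insert_le _ _).trans (Nat.succ_le_succ (card_insert_le _ _))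

lemma exists_connected_card_closedNbhd_ge (hS : (#S : ℝ) ≤ (Fintype.card V + 1) / 6)
    (hdeg : ∀ x ∈ S, (2 * Fintype.card V - 5) / 3 ≤ (#(S.erase x ∪ R.neighborFinset x) : ℝ))
    (hy : y ∈ S) (k : ℕ) :
    ∃ U : Finset V, y ∈ U ∧ (R.induce (U : Set V)).Connected ∧ #U ≤ 2 * k + 1 ∧
      2 * (Fintype.card V : ℝ) / 3 - #(R.closedNbhd U) ≤
        max 3 ((Fintype.card V : ℝ) / 6 / 2 ^ k) := by
  induction k with
  | zero =>
    refine ⟨{y}, mem_singleton_self y, ?_, by simp, le_max_of_le_right ?_⟩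
    · rw [coe_singleton]
      exact R.induce_singleton_connected y
    · have := card_closedNbhd_ge hS hdeg hy (mem_singleton_self y)
      rw [pow_zero, div_one]
      linarith
  | succ k ih =>
    obtain ⟨U, hyU, hU, hcard, hdef⟩ := ih
    by_cases hd : 2 * (Fintype.card V : ℝ) / 3 - #(R.closedNbhd U) ≤ 3
    · exact ⟨U, hyU, hU, by omega, hd.trans (le_max_left _ _)⟩
    obtain ⟨U', hUU', hU', hcard', hgain⟩ :=
      exists_connected_superset_card_closedNbhd_ge hS hdeg hy hyU hU (not_le.1 hd).le
    refine ⟨U', hUU' hyU, hU', by omega, le_max_of_le_right ?_⟩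
    have := (le_max_iff.1 hdef).resolve_left (by linarith)
    rw [pow_succ, ← div_div]
    linarith

lemma exists_connected_card_outerNbhd_ge (hS : (#S : ℝ) ≤ (Fintype.card V + 1) / 6)
    (hdeg : ∀ x ∈ S, (2 * Fintype.card V - 5) / 3 ≤ (#(S.erase x ∪ R.neighborFinset x) : ℝ))
    (hy : y ∈ S) (hn : 10 ≤ Fintype.card V) :
    ∃ U : Finset V, (R.induce (U : Set V)).Connected ∧
      (#U : ℝ) ≤ 27 * Real.log (Fintype.card V) ∧
      2 * (Fintype.card V : ℝ) / 3 - 27 * Real.log (Fintype.card V) ≤ #(R.outerNbhd U) := by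
  have hn10 : (10 : ℝ) ≤ Fintype.card V := by exact_mod_cast hn
  obtain ⟨K, hK, hK_log⟩ :=
    exists_le_two_pow_lt_two_mul_log_add_one (x := Fintype.card V) (by linarith)
  obtain ⟨U, -, hU, hU_card, hdef⟩ := exists_connected_card_closedNbhd_ge hS hdeg hy K
  have hdef' : 2 * (Fintype.card V : ℝ) / 3 - #(R.closedNbhd U) ≤ 3 := by
    refine hdef.trans (max_le le_rfl ?_)
    rw [div_le_iff₀ (by positivity)]
    linarith
  have hlog : 1 ≤ Real.log (Fintype.card V) := by
    rw [Real.le_log_iff_exp_le (by positivity)]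
    linarith [Real.exp_one_lt_d9]
  have hU_card' : (#U : ℝ) ≤ 2 * K + 1 := by exact_mod_cast hU_card
  have hW : (#(R.closedNbhd U) : ℝ) = #U + #(R.outerNbhd U) := by
    exact_mod_cast card_closedNbhd
  exact ⟨U, hU, by linarith, by linarith⟩

end SimpleGraph

lemma colSub_zero_adj_or_mem_supp {V : Type} {G : SimpleGraph V} {c : Sym2 V → Fin 2}
    {B : (colSub G c 1).ConnectedComponent} {x z : V} (hx : x ∈ B.supp) (hxz : G.Adj x z) :
    (colSub G c 0).Adj x z ∨ z ∈ B.supp := by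
  obtain h | h : c s(x, z) = 0 ∨ c s(x, z) = 1 := by omega
  · exact Or.inl ⟨hxz, h⟩
  · right
    rw [ConnectedComponent.mem_supp_iff] at hx ⊢
    rw [← hx]
    exact ConnectedComponent.sound (show (colSub G c 1).Adj x z from ⟨hxz, h⟩).reachable.symm

/-- There exists `n₀` such that for every `n ≥ n₀`: if a 2-coloured graph on `n`
    vertices with minimum degree at least `(2n-5)/3` has a blue component of order
    at most `(n+1)/6`, then there is a set `U`, connected in red, with
    `|U| ≤ 27 log n`, whose red neighbourhood `N_r(U)` (the vertices outside `U`
    joined by a red edge to `U`) has size at least `2n/3 - 27 log n`. -/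
theorem red_star :
    ∃ n₀ : ℕ, ∀ n : ℕ, n₀ ≤ n →
      ∀ (V : Type) [Fintype V] (G : SimpleGraph V) [DecidableRel G.Adj]
        (c : Sym2 V → Fin 2),
        Fintype.card V = n →
        (∀ v : V, (2 * (n : ℝ) - 5) / 3 ≤ G.degree v) →
        (∃ B : (colSub G c 1).ConnectedComponent,
          (B.supp.ncard : ℝ) ≤ ((n : ℝ) + 1) / 6) →
        ∃ U : Set V, ((colSub G c 0).induce U).Connected ∧
          (U.ncard : ℝ) ≤ 27 * Real.log n ∧
          2 * (n : ℝ) / 3 - 27 * Real.log n ≤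
            (({v : V | v ∉ U ∧ ∃ u ∈ U, (colSub G c 0).Adj u v}).ncard : ℝ) := by
  refine ⟨10, fun n hn V _ G _ c hcard hdeg ⟨B, hB⟩ => ?_⟩
  classical
  subst hcard
  obtain ⟨y, hy⟩ := B.exists_rep
  rw [Set.ncard_eq_toFinset_card'] at hB
  have hdegS : ∀ x ∈ B.supp.toFinset, (2 * Fintype.card V - 5) / 3 ≤
      (#(B.supp.toFinset.erase x ∪ (colSub G c 0).neighborFinset x) : ℝ) :=
    fun x hx => (hdeg x).trans <| Nat.cast_le.2 <| degree_le_card_erase_union_neighborFinset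
      fun z hxz => (colSub_zero_adj_or_mem_supp (Set.mem_toFinset.1 hx) hxz).imp_right
        Set.mem_toFinset.2
  obtain ⟨U, hU, hU_card, hN_card⟩ :=
    exists_connected_card_outerNbhd_ge hB hdegS (Set.mem_toFinset.2 hy) hn
  have hN : {v | v ∉ (U : Set V) ∧ ∃ u ∈ (U : Set V), (colSub G c 0).Adj u v} =
      ((colSub G c 0).outerNbhd U : Set V) := by
    ext v
    simp
  refine ⟨U, hU, ?_, ?_⟩
  · rwa [Set.ncard_coe_finset]
  · rwa [hN, Set.ncard_coe_finset]
end

section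
/- For every integer r ≥ 1 and every n ≥ 2^r, there exists a graph G on n vertices, with each edge coloured with one of r colours, such that the minimum degree of G is at least n − 1 − ⌈n/2^r⌉, and the vertex set of G cannot be covered by monochromatic components of pairwise distinct colours; that is, there is no choice of one component C_i in colour i for (some of) the colours i ∈ {1, …, r}, with at most one component per colour, whose union is the whole vertex set of G. -/
/-
Label each vertex `v` of `Fin n` by the binary digits of `v mod 2^r`, a vector in `{0,1}^r`,
and join two vertices when their labels agree in some coordinate, colouring the edge by such a
coordinate. Along an edge of colour `i` the `i`-th digit is unchanged, so a component of colour `i`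
has a constant `i`-th digit `b i`; since `n ≥ 2^r` every label occurs, and a vertex whose label
differs from `b` in every coordinate is covered by none of the components. A vertex `v` is adjacent
to everything except itself and the vertices with the complementary label, a residue class
mod `2^r` of size at most `⌈n/2^r⌉`.
-/

open SimpleGraph

theorem SimpleGraph.Reachable.apply_eq {V α : Type*} {G : SimpleGraph V} {f : V → α}
    (hf : ∀ u v, G.Adj u v → f u = f v) {u v : V} (h : G.Reachable u v) : f u = f v := by
  simpa [Relation.reflTransGen_eq_self] using ((reachable_iff_reflTransGen u v).1 h).lift f hf

theorem SimpleGraph.card_le_ncard_neighborSet_add {V : Type*} [Finite V] (G : SimpleGraph V)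
    (v : V) {S : Set V} (hS : (G.neighborSet v)ᶜ ⊆ insert v S) :
    Nat.card V ≤ (G.neighborSet v).ncard + S.ncard + 1 := by
  calc Nat.card V = (G.neighborSet v).ncard + (G.neighborSet v)ᶜ.ncard :=
        (Set.ncard_add_ncard_compl _).symm
    _ ≤ (G.neighborSet v).ncard + (insert v S).ncard :=
        Nat.add_le_add_left (Set.ncard_le_ncard hS) _
    _ ≤ (G.neighborSet v).ncard + S.ncard + 1 := by
        rw [add_assoc]; gcongr; exact Set.ncard_insert_le v S

theorem not_exists_cover_of_surjective {V : Type} {β : Type*} [Nontrivial β] {r : ℕ}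
    (G : SimpleGraph V) (c : Sym2 V → Fin r) (f : V → Fin r → β)
    (hf : ∀ i u v, (colSub G c i).Adj u v → f u i = f v i) (hsurj : Function.Surjective f) :
    ¬ ∃ C : Fin r → Set V,
        (∀ i : Fin r, C i = ∅ ∨ ∃ K : (colSub G c i).ConnectedComponent, C i = K.supp) ∧
        (⋃ i : Fin r, C i) = Set.univ := by
  rintro ⟨C, hC, hcover⟩
  have avoid : ∀ i, ∃ b, ∀ w ∈ C i, f w i ≠ b := by
    intro i
    rcases hC i with hempty | ⟨K, hK⟩
    · exact ⟨Classical.arbitrary β, by simp [hempty]⟩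
    · obtain ⟨w₀, rfl⟩ := K.exists_rep
      obtain ⟨b, hb⟩ := exists_ne (f w₀ i)
      refine ⟨b, fun w hw => ?_⟩
      rw [hK] at hw
      rw [(ConnectedComponent.reachable_of_mem_supp _ hw rfl).apply_eq (hf i)]
      exact hb.symm
  choose b hb using avoid
  obtain ⟨u, rfl⟩ := hsurj b
  obtain ⟨i, hi⟩ := Set.mem_iUnion.1 (hcover ▸ Set.mem_univ u)
  exact hb i u hi rfl

section Agreement

variable {V : Type} {ι β : Type*}

def agreementGraph (f : V → ι → β) : SimpleGraph V where
  Adj u v := u ≠ v ∧ ∃ i, f u i = f v i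
  symm := ⟨fun _ _ ⟨hne, i, hi⟩ => ⟨hne.symm, i, hi.symm⟩⟩
  loopless := ⟨fun _ h => h.1 rfl⟩

theorem agreementGraph_neighborSet_compl_subset (f : V → ι → Fin 2) (v : V) :
    ((agreementGraph f).neighborSet v)ᶜ ⊆ insert v {u | f u = fun i => (f v i).rev} := by
  intro u hu
  by_cases huv : u = v
  · exact Or.inl huv
  · refine Or.inr (funext fun i => ?_)
    have eq_rev_of_ne : ∀ a b : Fin 2, a ≠ b → b = a.rev := by decide
    exact eq_rev_of_ne _ _ fun h => hu ⟨Ne.symm huv, i, h⟩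

open Classical in
noncomputable def agreementColouring {r : ℕ} (f : V → Fin r → β) (i₀ : Fin r) : Sym2 V → Fin r :=
  fun e => if h : ∃ i, ∀ x ∈ e, ∀ y ∈ e, f x i = f y i then h.choose else i₀

theorem colSub_agreement_adj_apply_eq {r : ℕ} (f : V → Fin r → β) (i₀ i : Fin r) {u v : V}
    (h : (colSub (agreementGraph f) (agreementColouring f i₀) i).Adj u v) : f u i = f v i := by
  obtain ⟨⟨-, j, hj⟩, rfl⟩ := h
  have hagree : ∃ i, ∀ x ∈ s(u, v), ∀ y ∈ s(u, v), f x i = f y i :=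
    ⟨j, by simp only [Sym2.mem_iff]; rintro x (rfl | rfl) y (rfl | rfl) <;> simp [hj]⟩
  rw [agreementColouring, dif_pos hagree]
  exact hagree.choose_spec u (Sym2.mem_mk_left u v) v (Sym2.mem_mk_right u v)

end Agreement

section BinaryDigits

def binaryDigits (r : ℕ) {n : ℕ} (v : Fin n) : Fin r → Fin 2 :=
  finFunctionFinEquiv.symm (Fin.ofNat (2 ^ r) v)

variable {r n : ℕ}

theorem binaryDigits_eq_iff (u : Fin n) (g : Fin r → Fin 2) :
    binaryDigits r u = g ↔ (u : ℕ) % 2 ^ r = finFunctionFinEquiv g := by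
  rw [binaryDigits, Equiv.symm_apply_eq, Fin.ext_iff, Fin.val_ofNat]

theorem binaryDigits_surjective (hn : 2 ^ r ≤ n) :
    Function.Surjective (binaryDigits r : Fin n → Fin r → Fin 2) := fun g =>
  ⟨⟨finFunctionFinEquiv g, (finFunctionFinEquiv g).isLt.trans_le hn⟩,
    (binaryDigits_eq_iff _ g).2 (Nat.mod_eq_of_lt (finFunctionFinEquiv g).isLt)⟩

end BinaryDigits

theorem ncard_setOf_mod_eq_le {n k : ℕ} (hk : 0 < k) (m : ℕ) :
    {u : Fin n | (u : ℕ) % k = m}.ncard ≤ ⌈(n : ℝ) / k⌉₊ := by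
  have hmaps : Set.MapsTo (fun u : Fin n => (u : ℕ) / k) {u | (u : ℕ) % k = m}
      (Set.Iio ⌈(n : ℝ) / k⌉₊) := fun u _ => by
    rw [Set.mem_Iio, Nat.lt_ceil]
    calc (((u : ℕ) / k : ℕ) : ℝ) ≤ (u : ℝ) / k := Nat.cast_div_le
      _ < n / k := by gcongr; exact_mod_cast u.isLt
  have hinj : Set.InjOn (fun u : Fin n => (u : ℕ) / k) {u | (u : ℕ) % k = m} :=
    fun u hu w hw (h : (u : ℕ) / k = w / k) => Fin.ext <| by
      rw [← Nat.div_add_mod u k, ← Nat.div_add_mod w k, h, hu, hw]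
  simpa using Set.ncard_le_ncard_of_injOn _ hmaps hinj

/-- For every `r ≥ 1` and `n ≥ 2^r`, there is an `r`-coloured graph on `n` vertices
    with minimum degree at least `n - 1 - ⌈n/2^r⌉` whose vertices cannot be covered
    by monochromatic components of pairwise distinct colours (at most one component
    per colour). -/
theorem lower_bound_construction_distinct_colours :
    ∀ r : ℕ, 1 ≤ r → ∀ n : ℕ, 2 ^ r ≤ n →
      ∃ (G : SimpleGraph (Fin n)) (c : Sym2 (Fin n) → Fin r),
        (∀ v : Fin n, (n : ℝ) - 1 - (⌈(n : ℝ) / 2 ^ r⌉ : ℝ) ≤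
          ((G.neighborSet v).ncard : ℝ)) ∧
        ¬ ∃ C : Fin r → Set (Fin n),
            (∀ i : Fin r, C i = ∅ ∨
              ∃ K : (colSub G c i).ConnectedComponent, C i = K.supp) ∧
            (⋃ i : Fin r, C i) = Set.univ := by
  intro r hr n hn
  refine ⟨agreementGraph (binaryDigits r), agreementColouring (binaryDigits r) ⟨0, hr⟩,
    fun v => ?_, not_exists_cover_of_surjective _ _ _
      (fun i _ _ => colSub_agreement_adj_apply_eq _ _ i) (binaryDigits_surjective hn)⟩
  have hcard := card_le_ncard_neighborSet_add _ v
    (agreementGraph_neighborSet_compl_subset (binaryDigits r) v)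
  have hfibre : {u : Fin n | binaryDigits r u = fun i => (binaryDigits r v i).rev}.ncard
      ≤ ⌈(n : ℝ) / 2 ^ r⌉₊ := by
    simp only [binaryDigits_eq_iff]
    exact_mod_cast ncard_setOf_mod_eq_le (by positivity) _
  rw [Nat.card_fin] at hcard
  rw [← natCast_ceil_eq_intCast_ceil (by positivity)]
  have hcardR := (Nat.cast_le (α := ℝ)).2 hcard
  have hfibreR := (Nat.cast_le (α := ℝ)).2 hfibre
  push_cast at hcardR
  linarith
end

section
/- For every integer t ≥ 1 there exists n₀ such that for every n ≥ n₀ there is a graph G on n vertices, with each edge coloured red or blue, with minimum degree at least ⌈(2n−2t−1)/(t+1)⌉ − 1, whose vertex set cannot be covered by t monochromatic components; moreover G contains an independent set of t+1 vertices lying pairwise in distinct red components and pairwise in distinct blue components. -/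
/-!
Label the vertices by the cells `(i, j)`, `0 ≤ i ≤ j ≤ t`, of a triangular grid, join two vertices
whose cells share a row or a column, and colour such an edge red inside a row and blue otherwise.
Red components stay inside rows and blue ones inside columns, so the `t + 1` diagonal cells, each
holding one vertex, give an independent set meeting every monochromatic component at most once;
in particular no `t` monochromatic components cover.

A vertex of cell `(i, j)` is adjacent to all other vertices of its cross, row `i` together with
column `j`. Every cell above the diagonal lies in exactly two diagonal crosses, so these have total
weight `2n - (t + 1)`, and the degree bound leaves them almost no room to differ. Write
`n = (t + 1) + q t (t + 1) / 2 + (t + 1) s + r` with `2 s < t`, `r ≤ t`, and put `q` vertices in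
each cell above the diagonal, `s` more on each edge of a Hamiltonian cycle on `{0, …, t}` and the
last `r` along a matching: every diagonal cross then weighs at least `1 + t q + 2 s`, plus one
when `t + 1 ≤ 2 r`, and the other crosses are at least as heavy as soon as `t ≤ q + 1`.
-/

open SimpleGraph

open Finset

theorem SimpleGraph.Reachable.eq_of_forall_adj {V α : Type*} {G : SimpleGraph V} {f : V → α}
    (hf : ∀ u v, G.Adj u v → f u = f v) {x y : V} (h : G.Reachable x y) : f x = f y := by
  obtain ⟨w⟩ := h
  induction w with
  | nil => rfl
  | cons hadj _ ih => exact (hf _ _ hadj).trans ih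

theorem not_exists_isMonoComp_cover {V : Type} (G : SimpleGraph V) {r : ℕ} (c : Sym2 V → Fin r)
    {t : ℕ} (f : Fin (t + 1) → V)
    (hf : ∀ i a b, a ≠ b →
      (colSub G c i).connectedComponentMk (f a) ≠ (colSub G c i).connectedComponentMk (f b)) :
    ¬ ∃ S : Finset (Set V), S.card ≤ t ∧ (∀ C ∈ S, IsMonoComp G c C) ∧ ∀ v, ∃ C ∈ S, v ∈ C := by
  rintro ⟨S, hcard, hmono, hcover⟩
  choose C hCS hfC using fun k => hcover (f k)
  obtain ⟨a, b, hab, hCab⟩ := Fintype.exists_ne_map_eq_of_card_lt (fun k => (⟨C k, hCS k⟩ : S))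
    (by rw [Fintype.card_coe, Fintype.card_fin]; omega)
  obtain ⟨i, K, hK⟩ := hmono _ (hCS a)
  have ha : f a ∈ K.supp := hK ▸ hfC a
  have hb : f b ∈ K.supp := by
    rw [← hK, show C a = C b from congrArg Subtype.val hCab]
    exact hfC b
  exact hf i a b hab (ha.trans hb.symm)

lemma sum_ite_eq_add (s : Finset ℕ) (k b : ℕ) (f : ℕ → ℕ) :
    ∑ a ∈ s, (if b = a + k then f a else 0) = if k ≤ b ∧ b - k ∈ s then f (b - k) else 0 := by
  rw [sum_congr rfl fun a _ => show (if b = a + k then f a else 0) =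
    if a = b - k then (if k ≤ b then f (b - k) else 0) else 0 by split_ifs <;> grind, sum_ite_eq']
  split_ifs <;> tauto

lemma sum_range_ite_lt (n m : ℕ) : ∑ x ∈ range n, (if x < m then 1 else 0) = min m n := by
  rw [sum_boole, Nat.cast_id, show {x ∈ range n | x < m} = range (min m n) by
    ext; simp only [mem_filter, mem_range]; omega,
    card_range]

lemma exists_fiber_card_eq {ι : Type*} [DecidableEq ι] (s : Finset ι) (m : ι → ℕ) :
    ∃ φ : Fin (∑ p ∈ s, m p) → ι, (∀ v, φ v ∈ s) ∧ ∀ p ∈ s, #{v | φ v = p} = m p := by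
  have hcard : Fintype.card (Σ p : s, Fin (m p)) = ∑ p ∈ s, m p := by
    simp [Fintype.card_sigma, sum_attach s m]
  let e := (Fintype.equivFinOfCardEq hcard).symm
  refine ⟨fun v => (e v).1, fun v => (e v).1.2, fun p hp => ?_⟩
  rw [card_equiv e (t := {x | x.1 = ⟨p, hp⟩}) (by simp [Subtype.ext_iff]),
    show ({x | x.1 = ⟨p, hp⟩} : Finset (Σ p : s, Fin (m p))) =
        ({⟨p, hp⟩} : Finset s).sigma fun _ => univ by
      ext ⟨a, x⟩; simp, card_sigma]
  simp

lemma ceil_sub_one_le_of_two_mul_le {n t d : ℕ} (h : 2 * n ≤ (t + 1) * (d + 1) + 2 * t + 1) :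
    (⌈(2 * (n : ℝ) - 2 * t - 1) / (t + 1)⌉ : ℝ) - 1 ≤ d := by
  have hceil : ⌈(2 * (n : ℝ) - 2 * t - 1) / (t + 1)⌉ ≤ (d : ℤ) + 1 := by
    rw [Int.ceil_le, div_le_iff₀ (by positivity)]
    have : (2 * n : ℝ) ≤ (t + 1) * (d + 1) + 2 * t + 1 := by exact_mod_cast h
    push_cast
    linarith
  have : (⌈(2 * (n : ℝ) - 2 * t - 1) / (t + 1)⌉ : ℝ) ≤ (d : ℝ) + 1 := by exact_mod_cast hceil
  linarith

section Grid

variable {V : Type} {ι : Type*} {φ : V → ι × ι}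

def gridGraph (φ : V → ι × ι) : SimpleGraph V where
  Adj u v := u ≠ v ∧ ((φ u).1 = (φ v).1 ∨ (φ u).2 = (φ v).2)
  symm := ⟨fun _ _ h => ⟨h.1.symm, h.2.imp Eq.symm Eq.symm⟩⟩
  loopless := ⟨fun _ h => h.1 rfl⟩

lemma gridGraph_not_adj {u v : V} {a b : ι} (hu : φ u = (a, a)) (hv : φ v = (b, b))
    (hab : a ≠ b) : ¬ (gridGraph φ).Adj u v := by
  simp [gridGraph, hu, hv, hab]

lemma ncard_neighborSet_gridGraph_add_one [Fintype V] [DecidableEq ι] (v : V) :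
    ((gridGraph φ).neighborSet v).ncard + 1 =
      #{u | (φ u).1 = (φ v).1 ∨ (φ u).2 = (φ v).2} := by
  classical
  have : (gridGraph φ).neighborSet v =
      ↑(({u | (φ u).1 = (φ v).1 ∨ (φ u).2 = (φ v).2} : Finset V).erase v) := by
    ext u
    simp [gridGraph, eq_comm, and_comm]
  rw [this, Set.ncard_coe_finset, card_erase_add_one (by simp)]

variable [DecidableEq ι]

def gridColoring (φ : V → ι × ι) : Sym2 V → Fin 2 :=
  Sym2.lift ⟨fun u v => if (φ u).1 = (φ v).1 then 0 else 1, fun u v => by simp only [eq_comm]⟩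

lemma gridGraph_fst_eq_of_reachable_red {u v : V}
    (h : (colSub (gridGraph φ) (gridColoring φ) 0).Reachable u v) : (φ u).1 = (φ v).1 := by
  refine h.eq_of_forall_adj (f := fun w => (φ w).1) fun x y hxy => ?_
  by_contra hne
  simp [colSub, gridColoring, hne] at hxy

lemma gridGraph_snd_eq_of_reachable_blue {u v : V}
    (h : (colSub (gridGraph φ) (gridColoring φ) 1).Reachable u v) : (φ u).2 = (φ v).2 := by
  refine h.eq_of_forall_adj (f := fun w => (φ w).2) fun x y hxy => ?_
  obtain ⟨⟨_, hrow | hcol⟩, hc⟩ := hxy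
  · simp [gridColoring, hrow] at hc
  · exact hcol

lemma gridGraph_connectedComponentMk_ne {u v : V} {a b : ι}
    (hu : φ u = (a, a)) (hv : φ v = (b, b)) (hab : a ≠ b) (i : Fin 2) :
    (colSub (gridGraph φ) (gridColoring φ) i).connectedComponentMk u ≠
      (colSub (gridGraph φ) (gridColoring φ) i).connectedComponentMk v := by
  intro h
  fin_cases i
  · simpa [hu, hv, hab] using gridGraph_fst_eq_of_reachable_red (ConnectedComponent.exact h)
  · simpa [hu, hv, hab] using gridGraph_snd_eq_of_reachable_blue (ConnectedComponent.exact h)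

end Grid

namespace GridConstruction

def crossSum (t : ℕ) (g : ℕ → ℕ → ℕ) (i j : ℕ) : ℕ :=
  ∑ p ∈ range (t + 1) ×ˢ range (t + 1) with p.1 = i ∨ p.2 = j, g p.1 p.2

def totalSum (t : ℕ) (g : ℕ → ℕ → ℕ) : ℕ :=
  ∑ p ∈ range (t + 1) ×ˢ range (t + 1), g p.1 p.2

def diagWeight (a b : ℕ) : ℕ := if a = b then 1 else 0

def upperWeight (a b : ℕ) : ℕ := if a < b then 1 else 0

/-- The Hamiltonian cycle `0 - 2 - 4 - ⋯ - 5 - 3 - 1 - 0` on `{0, …, t}`, an edge `{a, b}` with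
`a < b` read as the cell `(a, b)`. Unlike the cycle `0 - 1 - ⋯ - t - 0`, it meets the cross of each
cell `(i, i + 1)` twice, not only the crosses of the diagonal cells. -/
def cycleWeight (t a b : ℕ) : ℕ :=
  (if b = a + 2 then 1 else 0) + (if a = 0 ∧ b = 1 then 1 else 0) +
    (if t = a + 1 ∧ b = t then 1 else 0)

/-- The first `r` edges of the matching `a ~ a + ⌊(t + 1) / 2⌋`, which meets every index as soon
as `t + 1 ≤ 2 r`; the rest of `r` goes to the cell `(0, 1)`. -/
def remainderWeight (t r a b : ℕ) : ℕ :=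
  (if b = a + (t + 1) / 2 then if a < r then 1 else 0 else 0) +
    (if a = 0 ∧ b = 1 then r - (t + 1 - (t + 1) / 2) else 0)

def cellSize (t q s r a b : ℕ) : ℕ :=
  diagWeight a b + q * upperWeight a b + s * cycleWeight t a b + remainderWeight t r a b

variable {t : ℕ}

lemma crossSum_add_apply {i j : ℕ} (g : ℕ → ℕ → ℕ) (hi : i ≤ t) (hj : j ≤ t) :
    crossSum t g i j + g i j = ∑ b ∈ range (t + 1), g i b + ∑ a ∈ range (t + 1), g a j := by
  have hij : {p ∈ range (t + 1) ×ˢ range (t + 1) | p.1 = i ∧ p.2 = j} = {(i, j)} := by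
    ext ⟨a, b⟩
    simp only [mem_filter, mem_product, mem_range, mem_singleton, Prod.mk.injEq]
    omega
  rw [crossSum, filter_or, ← sum_singleton (fun p : ℕ × ℕ => g p.1 p.2) (i, j), ← hij,
    filter_and, sum_union_inter, sum_filter, sum_filter, sum_product, sum_product_right]
  simp [hi, hj]

lemma crossSum_diagWeight {i j : ℕ} (hi : i ≤ t) (hj : j ≤ t) :
    crossSum t diagWeight i j + diagWeight i j = 2 := by
  rw [crossSum_add_apply _ hi hj]
  simp [diagWeight, hi, hj]

lemma crossSum_upperWeight {i j : ℕ} (hi : i ≤ t) (hj : j ≤ t) :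
    crossSum t upperWeight i j + upperWeight i j = t - i + j := by
  rw [crossSum_add_apply _ hi hj]
  have hrow : {b ∈ range (t + 1) | i < b} = Ioc i t := by
    ext; simp only [mem_filter, mem_range, mem_Ioc]; omega
  have hcol : {a ∈ range (t + 1) | a < j} = range j := by
    ext; simp only [mem_filter, mem_range]; omega
  simp [upperWeight, hrow, hcol]

lemma two_le_crossSum_cycleWeight {i j : ℕ} (ht : 1 ≤ t) (hij : i ≤ j) (hji : j ≤ i + 1)
    (hj : j ≤ t) : 2 ≤ crossSum t (cycleWeight t) i j := by
  have h := crossSum_add_apply (cycleWeight t) (hij.trans hj) hj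
  simp only [cycleWeight, sum_add_distrib, ite_and, sum_ite_irrel, sum_ite_eq', sum_ite_eq_add,
    sum_const_zero, mem_range] at h
  grind

lemma one_le_crossSum_remainderWeight {r k : ℕ} (ht : 1 ≤ t) (hr : t + 1 ≤ 2 * r) (hk : k ≤ t) :
    1 ≤ crossSum t (remainderWeight t r) k k := by
  have h := crossSum_add_apply (remainderWeight t r) hk hk
  simp only [remainderWeight, sum_add_distrib, ite_and, sum_ite_irrel, sum_ite_eq', sum_ite_eq_add,
    sum_const_zero, mem_range] at h
  grind

lemma totalSum_diagWeight : totalSum t diagWeight = t + 1 := by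
  simp only [totalSum, sum_product, diagWeight, sum_ite_eq, mem_range, sum_range_ite_lt, min_self]

lemma two_mul_totalSum_upperWeight : 2 * totalSum t upperWeight = (t + 1) * t := by
  have hrow (a : ℕ) : ∑ b ∈ range (t + 1), upperWeight a b = t - a := by
    have : {b ∈ range (t + 1) | a < b} = Ioc a t := by
      ext; simp only [mem_filter, mem_range, mem_Ioc]; omega
    simp [upperWeight, this]
  have h := sum_range_reflect (fun a => a) (t + 1)
  simp only [add_tsub_cancel_right] at h
  rw [totalSum, sum_product, sum_congr rfl fun a _ => hrow a, h, mul_comm, sum_range_id_mul_two,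
    add_tsub_cancel_right]

lemma totalSum_cycleWeight (ht : 1 ≤ t) : totalSum t (cycleWeight t) = t + 1 := by
  simp only [totalSum, sum_product, cycleWeight, sum_add_distrib, ite_and, sum_ite_irrel,
    sum_ite_eq', sum_ite_eq_add, sum_const_zero, mem_range]
  have h := sum_range_ite_lt (t + 1) (t - 1)
  simp only [show ∀ x, (x < t - 1 ↔ x + 2 < t + 1) by omega] at h
  grind

lemma totalSum_remainderWeight (ht : 1 ≤ t) (r : ℕ) : totalSum t (remainderWeight t r) = r := by
  simp only [totalSum, sum_product, remainderWeight, sum_add_distrib, ite_and, sum_ite_irrel,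
    sum_ite_eq', sum_const_zero, mem_range]
  have h := sum_range_ite_lt (t + 1) (min r (t + 1 - (t + 1) / 2))
  simp only [show ∀ x, (x < min r (t + 1 - (t + 1) / 2) ↔ x + (t + 1) / 2 < t + 1 ∧ x < r) by
    omega, ite_and] at h
  grind

lemma crossSum_cellSize (q s r i j : ℕ) :
    crossSum t (cellSize t q s r) i j = crossSum t diagWeight i j +
      q * crossSum t upperWeight i j + s * crossSum t (cycleWeight t) i j +
      crossSum t (remainderWeight t r) i j := by
  simp only [crossSum, cellSize, sum_add_distrib, mul_sum]

lemma two_mul_totalSum_cellSize (ht : 1 ≤ t) (q s r : ℕ) :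
    2 * totalSum t (cellSize t q s r) =
      2 * (t + 1) + (t + 1) * t * q + 2 * ((t + 1) * s + r) := by
  have hU := two_mul_totalSum_upperWeight (t := t)
  have hsplit : totalSum t (cellSize t q s r) = totalSum t diagWeight +
      q * totalSum t upperWeight + s * totalSum t (cycleWeight t) +
      totalSum t (remainderWeight t r) := by
    simp only [totalSum, cellSize, sum_add_distrib, mul_sum]
  rw [hsplit, totalSum_diagWeight, totalSum_cycleWeight ht, totalSum_remainderWeight ht]
  linear_combination q * hU

lemma two_mul_totalSum_cellSize_le {q s r i j : ℕ} (ht : 1 ≤ t) (hs : 2 * s < t) (hr : r ≤ t)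
    (hq : t ≤ q + 1) (hij : i ≤ j) (hj : j ≤ t) :
    2 * totalSum t (cellSize t q s r) ≤
      (t + 1) * crossSum t (cellSize t q s r) i j + 2 * t + 1 := by
  have hδ := crossSum_diagWeight (hij.trans hj) hj
  have hU := crossSum_upperWeight (hij.trans hj) hj
  simp only [diagWeight, upperWeight] at hδ hU
  rw [two_mul_totalSum_cellSize ht]
  -- The crosses of `(i, i)` and `(i, i + 1)` contain exactly `t` cells above the diagonal, all
  -- the others at least `t + 1`, which outweighs the remainder since `t - 1 ≤ q`.
  obtain rfl | rfl | hfar : i = j ∨ j = i + 1 ∨ i + 2 ≤ j := by omega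
  · have hC := two_le_crossSum_cycleWeight ht le_rfl (Nat.le_succ i) hj
    have hlow : 1 + q * t + 2 * s + crossSum t (remainderWeight t r) i i ≤
        crossSum t (cellSize t q s r) i i := by
      rw [crossSum_cellSize, show crossSum t diagWeight i i = 1 by simpa using hδ,
        show crossSum t upperWeight i i = t by rw [if_neg (lt_irrefl i)] at hU; omega]
      nlinarith
    have hR : 2 * r ≤ t + (t + 1) * crossSum t (remainderWeight t r) i i := by
      by_cases h2r : t + 1 ≤ 2 * r
      · nlinarith [one_le_crossSum_remainderWeight ht h2r hj]
      · omega
    nlinarith [Nat.mul_le_mul_left (t + 1) hlow]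
  · have hC := two_le_crossSum_cycleWeight ht (Nat.le_succ i) le_rfl hj
    have hlow : 2 + q * t + 2 * s ≤ crossSum t (cellSize t q s r) i (i + 1) := by
      rw [crossSum_cellSize, show crossSum t diagWeight i (i + 1) = 2 by simpa using hδ,
        show crossSum t upperWeight i (i + 1) = t by rw [if_pos i.lt_succ_self] at hU; omega]
      nlinarith
    nlinarith [Nat.mul_le_mul_left (t + 1) hlow]
  · have hU' : t + 1 ≤ crossSum t upperWeight i j := by
      rw [if_pos (by omega)] at hU; omega
    have hlow : 2 + q * (t + 1) ≤ crossSum t (cellSize t q s r) i j := by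
      rw [crossSum_cellSize,
        show crossSum t diagWeight i j = 2 by rw [if_neg (by omega)] at hδ; omega]
      nlinarith [Nat.mul_le_mul_left q hU']
    nlinarith [Nat.mul_le_mul_left (t + 1) hlow,
      Nat.mul_le_mul_left (t + 1) (show 2 * s ≤ q by omega)]

lemma exists_cellSize_params {n : ℕ} (ht : 1 ≤ t) (hn : (t + 1) ^ 3 ≤ n) :
    ∃ q s r, 2 * s < t ∧ r ≤ t ∧ t ≤ q + 1 ∧ n = totalSum t (cellSize t q s r) := by
  obtain ⟨T, hT⟩ : ∃ T, 2 * T = t * (t + 1) :=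
    ⟨_, Nat.mul_div_cancel' (Nat.even_mul_succ_self t).two_dvd⟩
  obtain ⟨W, rfl⟩ : ∃ W, n = W + (t + 1) :=
    ⟨n - (t + 1), by have := Nat.le_self_pow (n := 3) (by norm_num) (t + 1); omega⟩
  have hTpos : 0 < T := by nlinarith
  obtain ⟨q, ρ, hρT, hW⟩ : ∃ q ρ, ρ < T ∧ W = T * q + ρ :=
    ⟨W / T, W % T, Nat.mod_lt _ hTpos, (Nat.div_add_mod W T).symm⟩
  obtain ⟨s, r, hr, hρ⟩ : ∃ s r, r < t + 1 ∧ ρ = (t + 1) * s + r :=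
    ⟨ρ / (t + 1), ρ % (t + 1), Nat.mod_lt _ t.succ_pos, (Nat.div_add_mod ρ (t + 1)).symm⟩
  refine ⟨q, s, r, ?_, Nat.le_of_lt_succ hr, ?_, ?_⟩
  · by_contra! h
    nlinarith [Nat.mul_le_mul_left (t + 1) h]
  · by_contra! h
    nlinarith [Nat.mul_le_mul_left T (show q + 2 ≤ t by omega)]
  · apply Nat.eq_of_mul_eq_mul_left two_pos
    rw [two_mul_totalSum_cellSize ht]
    nlinarith

lemma cellSize_eq_zero_of_lt {q s r a b : ℕ} (hba : b < a) : cellSize t q s r a b = 0 := by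
  rw [cellSize, diagWeight, upperWeight, cycleWeight, remainderWeight]
  split_ifs <;> omega

lemma one_le_cellSize_self (q s r a : ℕ) : 1 ≤ cellSize t q s r a a := by
  simp only [cellSize, diagWeight, if_true]
  omega

lemma card_filter_eq_crossSum {V : Type*} [Fintype V] {φ : V → ℕ × ℕ} {g : ℕ → ℕ → ℕ}
    (hφ : ∀ v, φ v ∈ range (t + 1) ×ˢ range (t + 1))
    (hfib : ∀ p ∈ range (t + 1) ×ˢ range (t + 1), #{v | φ v = p} = g p.1 p.2) (i j : ℕ) :
    #{u | (φ u).1 = i ∨ (φ u).2 = j} = crossSum t g i j := by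
  rw [card_eq_sum_card_fiberwise (f := φ)
    (t := {p ∈ range (t + 1) ×ˢ range (t + 1) | p.1 = i ∨ p.2 = j}) (by intro v; simp_all),
    crossSum]
  refine sum_congr rfl fun p hp => ?_
  rw [mem_filter] at hp
  rw [← hfib p hp.1, filter_filter]
  congr 1
  ext v
  simp only [mem_filter, mem_univ, true_and, and_iff_right_iff_imp]
  rintro rfl
  exact hp.2

lemma two_mul_totalSum_le_ncard_neighborSet {V : Type} [Fintype V] {q s r : ℕ} (ht : 1 ≤ t)
    (hs : 2 * s < t) (hr : r ≤ t) (hq : t ≤ q + 1) {φ : V → ℕ × ℕ}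
    (hφ : ∀ v, φ v ∈ range (t + 1) ×ˢ range (t + 1))
    (hfib : ∀ p ∈ range (t + 1) ×ˢ range (t + 1), #{v | φ v = p} = cellSize t q s r p.1 p.2)
    (v : V) :
    2 * totalSum t (cellSize t q s r) ≤
      (t + 1) * (((gridGraph φ).neighborSet v).ncard + 1) + 2 * t + 1 := by
  rcases hv : φ v with ⟨i, j⟩
  have hi : i ≤ t ∧ j ≤ t := by simpa [hv, Nat.lt_succ_iff] using hφ v
  have hij : i ≤ j := by
    by_contra! hji
    have hfib' := hfib (i, j) (by simpa [hv] using hφ v)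
    rw [cellSize_eq_zero_of_lt hji, card_eq_zero, filter_eq_empty_iff] at hfib'
    exact hfib' (mem_univ v) hv
  rw [ncard_neighborSet_gridGraph_add_one, hv, card_filter_eq_crossSum hφ hfib]
  exact two_mul_totalSum_cellSize_le ht hs hr hq hij hi.2

end GridConstruction

open GridConstruction

/-- For every `t ≥ 1` and `n` sufficiently large, there is a 2-coloured graph on
    `n` vertices with minimum degree at least `⌈(2n-2t-1)/(t+1)⌉ - 1` whose vertices
    cannot be covered by `t` monochromatic components; moreover it has an independent
    set of `t+1` vertices lying pairwise in distinct red components and pairwise in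
    distinct blue components. -/
theorem lower_bound_construction_cover :
    ∀ t : ℕ, 1 ≤ t → ∃ n₀ : ℕ, ∀ n : ℕ, n₀ ≤ n →
      ∃ (G : SimpleGraph (Fin n)) (c : Sym2 (Fin n) → Fin 2),
        (∀ v : Fin n, (⌈(2 * (n : ℝ) - 2 * t - 1) / (t + 1)⌉ : ℝ) - 1 ≤
          ((G.neighborSet v).ncard : ℝ)) ∧
        (¬ ∃ S : Finset (Set (Fin n)), S.card ≤ t ∧ (∀ C ∈ S, IsMonoComp G c C) ∧
          ∀ v : Fin n, ∃ C ∈ S, v ∈ C) ∧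
        ∃ f : Fin (t + 1) → Fin n, Function.Injective f ∧
          (∀ i j : Fin (t + 1), ¬ G.Adj (f i) (f j)) ∧
          (∀ i j : Fin (t + 1), i ≠ j →
            (colSub G c 0).connectedComponentMk (f i) ≠
              (colSub G c 0).connectedComponentMk (f j)) ∧
          (∀ i j : Fin (t + 1), i ≠ j →
            (colSub G c 1).connectedComponentMk (f i) ≠
              (colSub G c 1).connectedComponentMk (f j)) := by
  intro t ht
  refine ⟨(t + 1) ^ 3, fun n hn => ?_⟩
  obtain ⟨q, s, r, hs, hr, hq, rfl⟩ := exists_cellSize_params ht hn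
  obtain ⟨φ, hφ, hfib⟩ := exists_fiber_card_eq (range (t + 1) ×ˢ range (t + 1))
    fun p => cellSize t q s r p.1 p.2
  have hdiag (k : Fin (t + 1)) : ∃ v, φ v = ((k : ℕ), (k : ℕ)) := by
    have := hfib (k, k) (by simp [k.is_lt])
    obtain ⟨v, hv⟩ := card_pos.mp (this ▸ one_le_cellSize_self q s r k)
    exact ⟨v, (mem_filter.mp hv).2⟩
  choose f hf using hdiag
  have hmk (i : Fin 2) (a b : Fin (t + 1)) (hab : a ≠ b) :=
    gridGraph_connectedComponentMk_ne (hf a) (hf b) (Fin.val_injective.ne hab) i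
  refine ⟨gridGraph φ, gridColoring φ, fun v => ceil_sub_one_le_of_two_mul_le ?_,
    not_exists_isMonoComp_cover _ _ f hmk, f, fun a b hab => ?_, fun a b => ?_, hmk 0, hmk 1⟩
  · exact two_mul_totalSum_le_ncard_neighborSet ht hs hr hq hφ hfib v
  · exact Fin.ext (by simpa [hf] using congrArg φ hab)
  · rcases eq_or_ne a b with rfl | hab
    · exact (gridGraph φ).loopless.irrefl _
    · exact gridGraph_not_adj (hf a) (hf b) (Fin.val_injective.ne hab)
end

section
/- Let G be a graph on n vertices, with each edge coloured red, blue or yellow, such that the minimum degree of G is at least 7n/8, and let R be a red component and B a blue component of G with |R ∩ B| ≥ n/4. Then either R ∪ B is the whole vertex set of G, or there is a yellow component Y of G with |R ∩ B ∩ Y| ≥ n/8. -/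
/-!
Pick a vertex `v` outside `R ∪ B`. An edge from `v` into `R ∩ B` can be neither red (it would put
`v` into `R`) nor blue (it would put `v` into `B`), so it is yellow and all neighbours of `v` in
`R ∩ B` lie in the yellow component of `v`. Since `v` misses at most `n/8` vertices, it has at
least `n/4 - n/8 = n/8` neighbours in `R ∩ B`.
-/

open SimpleGraph

namespace SimpleGraph

variable {V : Type}

theorem ncard_add_degree_le_ncard_inter_neighborSet_add_card [Fintype V] (G : SimpleGraph V)
    [DecidableRel G.Adj] (S : Set V) (v : V) :
    S.ncard + G.degree v ≤ (S ∩ G.neighborSet v).ncard + Fintype.card V := by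
  have hN : (G.neighborSet v).ncard = G.degree v := by
    rw [Set.ncard_eq_toFinset_card', ← card_neighborSet_eq_degree, Set.toFinset_card]
  have hunion : (S ∪ G.neighborSet v).ncard ≤ Fintype.card V := by
    rw [← Nat.card_eq_fintype_card, ← Set.ncard_univ]
    exact Set.ncard_le_ncard (Set.subset_univ _)
  have := Set.ncard_union_add_ncard_inter S (G.neighborSet v)
  omega

theorem colSub_color_ne_of_adj {G : SimpleGraph V} {r : ℕ} {c : Sym2 V → Fin r} {i : Fin r}
    (C : (colSub G c i).ConnectedComponent) {u v : V} (hadj : G.Adj u v) (hu : u ∈ C.supp)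
    (hv : v ∉ C.supp) : c s(u, v) ≠ i :=
  fun hcol => hv (C.mem_supp_of_adj_mem_supp hu ⟨hadj, hcol⟩)

theorem inter_neighborSet_subset_supp_colSub_two {G : SimpleGraph V} {c : Sym2 V → Fin 3}
    {R : (colSub G c 0).ConnectedComponent} {B : (colSub G c 1).ConnectedComponent} {v : V}
    (hvR : v ∉ R.supp) (hvB : v ∉ B.supp) :
    R.supp ∩ B.supp ∩ G.neighborSet v ⊆
      R.supp ∩ B.supp ∩ ((colSub G c 2).connectedComponentMk v).supp := by
  rintro u ⟨⟨huR, huB⟩, hadj⟩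
  have hnot_red := colSub_color_ne_of_adj R hadj.symm huR hvR
  have hnot_blue := colSub_color_ne_of_adj B hadj.symm huB hvB
  have hyellow : c s(v, u) = 2 := by
    rw [Sym2.eq_swap]
    omega
  exact ⟨⟨huR, huB⟩, ConnectedComponent.mem_supp_of_adj_mem_supp _ rfl ⟨hadj, hyellow⟩⟩

end SimpleGraph

/-- In a 3-coloured graph with minimum degree at least `7n/8`, if `R` is a red
    component and `B` a blue component with `|R ∩ B| ≥ n/4`, then either `R ∪ B` is
    the whole vertex set, or some yellow component `Y` satisfies `|R ∩ B ∩ Y| ≥ n/8`. -/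
theorem two_intersection_dichotomy {V : Type} [Fintype V]
    (G : SimpleGraph V) [DecidableRel G.Adj] (c : Sym2 V → Fin 3)
    (n : ℕ) (hn : Fintype.card V = n)
    (hdeg : ∀ v : V, 7 * (n : ℝ) / 8 ≤ G.degree v)
    (R : (colSub G c 0).ConnectedComponent) (B : (colSub G c 1).ConnectedComponent)
    (hint : (n : ℝ) / 4 ≤ ((R.supp ∩ B.supp).ncard : ℝ)) :
    R.supp ∪ B.supp = Set.univ ∨
      ∃ Y : (colSub G c 2).ConnectedComponent,
        (n : ℝ) / 8 ≤ ((R.supp ∩ B.supp ∩ Y.supp).ncard : ℝ) := by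
  refine or_iff_not_imp_left.mpr fun hfull => ?_
  obtain ⟨v, hv⟩ := (Set.ne_univ_iff_exists_notMem _).mp hfull
  rw [Set.mem_union, not_or] at hv
  refine ⟨(colSub G c 2).connectedComponentMk v, ?_⟩
  have hcount : (((R.supp ∩ B.supp).ncard + G.degree v : ℕ) : ℝ) ≤
      (((R.supp ∩ B.supp ∩ G.neighborSet v).ncard + n : ℕ) : ℝ) := by
    rw [← hn]
    exact_mod_cast G.ncard_add_degree_le_ncard_inter_neighborSet_add_card _ v
  have hyellow : ((R.supp ∩ B.supp ∩ G.neighborSet v).ncard : ℝ) ≤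
      ((R.supp ∩ B.supp ∩ ((colSub G c 2).connectedComponentMk v).supp).ncard : ℝ) := by
    exact_mod_cast Set.ncard_le_ncard (inter_neighborSet_subset_supp_colSub_two hv.1 hv.2)
  push_cast at hcount
  linarith [hdeg v]
end
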